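/- arXiv:0904.1980 — 6 statements merged into one kernel-verified Lean document; each statement's English description precedes it below -/
import Mathlib

section
/- Let A = (a_{ijk}) be a 2×2×2 real array with entries summing to 1. Define formal 'moments' by treating the entries as a joint distribution of three binary variables X1, X2, X3 taking values 0 and 1: λ_i = E[X_i], μ_{ij} = E[(X_i−λ_i)(X_j−λ_j)], μ_{123} = E[(X_1−λ_1)(X_2−λ_2)(X_3−λ_3)] (these are polynomial expressions in the a_{ijk}). Then the 2×2×2 hyperdeterminant satisfies Det A = μ_{123}² + 4 μ_{12} μ_{13} μ_{23}. -/
open Finset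

/-- The hyperdeterminant of a `2×2×2` real array (Gelfand–Kapranov–Zelevinsky). -/
noncomputable def hyperDet (a : Fin 2 → Fin 2 → Fin 2 → ℝ) : ℝ :=
  (a 0 0 0 ^ 2 * a 1 1 1 ^ 2 + a 0 0 1 ^ 2 * a 1 1 0 ^ 2 +
      a 0 1 0 ^ 2 * a 1 0 1 ^ 2 + a 0 1 1 ^ 2 * a 1 0 0 ^ 2)
    - 2 * (a 0 0 0 * a 0 0 1 * a 1 1 0 * a 1 1 1 +
           a 0 0 0 * a 0 1 0 * a 1 0 1 * a 1 1 1 +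
           a 0 0 0 * a 0 1 1 * a 1 0 0 * a 1 1 1 +
           a 0 0 1 * a 0 1 0 * a 1 0 1 * a 1 1 0 +
           a 0 0 1 * a 0 1 1 * a 1 1 0 * a 1 0 0 +
           a 0 1 0 * a 0 1 1 * a 1 0 1 * a 1 0 0)
    + 4 * (a 0 0 0 * a 0 1 1 * a 1 0 1 * a 1 1 0 +
           a 0 0 1 * a 0 1 0 * a 1 0 0 * a 1 1 1)

/-- Formal mean `λ_i = E[X_i]` of the `i`-th binary variable under the (formal) joint
distribution `p` on `{0,1}³`. -/
noncomputable def EV3 (p : (Fin 3 → Fin 2) → ℝ) (i : Fin 3) : ℝ :=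
  ∑ x : Fin 3 → Fin 2, p x * ((x i : ℕ) : ℝ)

/-- Formal central second moment `μ_{ij} = E[(X_i − λ_i)(X_j − λ_j)]`. -/
noncomputable def cov3 (p : (Fin 3 → Fin 2) → ℝ) (i j : Fin 3) : ℝ :=
  ∑ x : Fin 3 → Fin 2, p x * (((x i : ℕ) : ℝ) - EV3 p i) * (((x j : ℕ) : ℝ) - EV3 p j)

/-- Formal central third moment `μ_{123} = E[∏ (X_i − λ_i)]`. -/
noncomputable def thirdCentral3 (p : (Fin 3 → Fin 2) → ℝ) : ℝ :=
  ∑ x : Fin 3 → Fin 2, p x * ∏ i : Fin 3, (((x i : ℕ) : ℝ) - EV3 p i)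

/-!
The hyperdeterminant is invariant under `SL₂ × SL₂ × SL₂`: applying a matrix `g` along one
axis multiplies it by `(det g)²`. The moments `E[∏ (X_m - t_m)^{e_m}]` about any point `t`
form the array obtained from `a` by applying `!![1, 1; -t_m, 1 - t_m]`, of determinant `1`,
along every axis, so they have the same hyperdeterminant as `a`. About the mean the
first-order moments vanish, the zeroth one is the total mass `1`, and only the terms
`μ₁₂₃²` and `4 μ₁₂ μ₁₃ μ₂₃` of the hyperdeterminant survive.
-/

lemma Fintype.sum_fun_fin_succ {α M : Type*} [Fintype α] [AddCommMonoid M] {n : ℕ}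
    (f : (Fin (n + 1) → α) → M) : ∑ x, f x = ∑ i, ∑ t : Fin n → α, f (Fin.cons i t) := by
  rw [← Fintype.sum_prod_type']
  exact (Fintype.sum_equiv (Fin.consEquiv fun _ => α) _ _ fun _ => rfl).symm

lemma Fintype.sum_fun_fin_three {α M : Type*} [Fintype α] [AddCommMonoid M]
    (f : (Fin 3 → α) → M) : ∑ x, f x = ∑ i, ∑ j, ∑ k, f ![i, j, k] := by
  simp only [Fintype.sum_fun_fin_succ, Fintype.sum_unique]
  rfl

section AxisAction

variable (g : Matrix (Fin 2) (Fin 2) ℝ) (a : Fin 2 → Fin 2 → Fin 2 → ℝ)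

def mulFirst : Fin 2 → Fin 2 → Fin 2 → ℝ := fun i j k => ∑ i', g i i' * a i' j k

def mulSecond : Fin 2 → Fin 2 → Fin 2 → ℝ := fun i j k => ∑ j', g j j' * a i j' k

def mulThird : Fin 2 → Fin 2 → Fin 2 → ℝ := fun i j k => ∑ k', g k k' * a i j k'

lemma hyperDet_mulFirst : hyperDet (mulFirst g a) = g.det ^ 2 * hyperDet a := by
  simp only [hyperDet, mulFirst, Fin.sum_univ_two, Matrix.det_fin_two]
  ring

lemma hyperDet_mulSecond : hyperDet (mulSecond g a) = g.det ^ 2 * hyperDet a := by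
  simp only [hyperDet, mulSecond, Fin.sum_univ_two, Matrix.det_fin_two]
  ring

lemma hyperDet_mulThird : hyperDet (mulThird g a) = g.det ^ 2 * hyperDet a := by
  simp only [hyperDet, mulThird, Fin.sum_univ_two, Matrix.det_fin_two]
  ring

end AxisAction

lemma hyperDet_eq_of_linear_eq_zero (b : Fin 2 → Fin 2 → Fin 2 → ℝ)
    (h₁ : b 1 0 0 = 0) (h₂ : b 0 1 0 = 0) (h₃ : b 0 0 1 = 0) :
    hyperDet b = b 0 0 0 ^ 2 * b 1 1 1 ^ 2 + 4 * b 0 0 0 * b 1 1 0 * b 1 0 1 * b 0 1 1 := by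
  simp only [hyperDet, h₁, h₂, h₃]
  ring

noncomputable def momentAbout (p : (Fin 3 → Fin 2) → ℝ) (t : Fin 3 → ℝ) (e : Fin 3 → Fin 2) :
    ℝ :=
  ∑ x, p x * ∏ m, (((x m : ℕ) : ℝ) - t m) ^ (e m : ℕ)

def momentMatrix (t : ℝ) : Matrix (Fin 2) (Fin 2) ℝ := Matrix.of fun e v => ((v : ℕ) - t) ^ (e : ℕ)

lemma det_momentMatrix (t : ℝ) : (momentMatrix t).det = 1 := by
  simp [momentMatrix, Matrix.det_fin_two]

lemma momentAbout_eq_mul (a : Fin 2 → Fin 2 → Fin 2 → ℝ) (t : Fin 3 → ℝ) (i j k : Fin 2) :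
    momentAbout (fun x => a (x 0) (x 1) (x 2)) t ![i, j, k] =
      mulFirst (momentMatrix (t 0)) (mulSecond (momentMatrix (t 1))
        (mulThird (momentMatrix (t 2)) a)) i j k := by
  simp only [momentAbout, Fintype.sum_fun_fin_three, mulFirst, mulSecond, mulThird, momentMatrix,
    Matrix.of_apply, Fin.prod_univ_three, Fin.sum_univ_two, Matrix.cons_val_zero,
    Matrix.cons_val_one, Matrix.cons_val_two, Matrix.head_cons, Matrix.tail_cons,
    Fin.val_zero, Fin.val_one, Nat.cast_zero, Nat.cast_one]
  ring

lemma hyperDet_momentAbout (a : Fin 2 → Fin 2 → Fin 2 → ℝ) (t : Fin 3 → ℝ) :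
    hyperDet (fun i j k => momentAbout (fun x => a (x 0) (x 1) (x 2)) t ![i, j, k]) =
      hyperDet a := by
  simp only [momentAbout_eq_mul, hyperDet_mulFirst, hyperDet_mulSecond, hyperDet_mulThird,
    det_momentMatrix, one_pow, one_mul]

lemma sum_mul_sub_EV3 {p : (Fin 3 → Fin 2) → ℝ} (hp : ∑ x, p x = 1) (i : Fin 3) :
    ∑ x, p x * (((x i : ℕ) : ℝ) - EV3 p i) = 0 := by
  simp only [mul_sub, Finset.sum_sub_distrib, ← Finset.sum_mul, hp, one_mul, EV3, sub_self]

/-- For a `2×2×2` real array with entries summing to `1`, treating the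
entries formally as a joint distribution of three binary variables, the hyperdeterminant
equals `μ_{123}² + 4 μ_{12} μ_{13} μ_{23}`. -/
theorem hyperDet_eq_central_moments (a : Fin 2 → Fin 2 → Fin 2 → ℝ)
    (hsum : ∑ i : Fin 2, ∑ j : Fin 2, ∑ k : Fin 2, a i j k = 1)
    (p : (Fin 3 → Fin 2) → ℝ) (hp : p = fun x => a (x 0) (x 1) (x 2)) :
    hyperDet a =
      thirdCentral3 p ^ 2 + 4 * cov3 p 0 1 * cov3 p 0 2 * cov3 p 1 2 := by
  have hmass : ∑ x, p x = 1 := by simpa [hp, Fintype.sum_fun_fin_three] using hsum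
  rw [← hyperDet_momentAbout a (EV3 p), ← hp, hyperDet_eq_of_linear_eq_zero]
  · simp [momentAbout, cov3, thirdCentral3, Fin.prod_univ_three, hmass, mul_assoc]
  all_goals simpa [momentAbout, Fin.prod_univ_three] using sum_mul_sub_EV3 hmass _
end

section
/- Let H, X1, X2, X3 be binary random variables with X1, X2, X3 conditionally independent given H (the tripod/naive Bayes model). Then the product of the three pairwise covariances is nonnegative: Cov(X1,X2)·Cov(X1,X3)·Cov(X2,X3) ≥ 0. -/
open Finset

/-- Joint distribution of the tripod (naive Bayes) model: `X₁,X₂,X₃` are binary and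
conditionally independent given the binary hidden variable `H`, with `π h = P(H=h)` and
`q i a h = P(X_i = a | H = h)`. -/
noncomputable def tripodJoint (π : Fin 2 → ℝ) (q : Fin 3 → Fin 2 → Fin 2 → ℝ) :
    (Fin 3 → Fin 2) → ℝ :=
  fun x => ∑ h : Fin 2, π h * ∏ i : Fin 3, q i (x i) h

/- Conditionally on `H`, the coordinates are independent, so every covariance comes from mixing
the two components alone: `Cov(X_i, X_j) = π₀ π₁ Δ_i Δ_j` with
`Δ_i = P(X_i = 1 | H = 0) - P(X_i = 1 | H = 1)`. Hence the product of the three covariances is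
`(π₀ π₁)³ (Δ₀ Δ₁ Δ₂)² ≥ 0`. -/

lemma sum_prod_mul_prod_val {ι : Type*} [Fintype ι] [DecidableEq ι] (r : ι → Fin 2 → ℝ)
    (hr : ∀ k, r k 0 + r k 1 = 1) (S : Finset ι) :
    ∑ x : ι → Fin 2, (∏ k, r k (x k)) * ∏ k ∈ S, ((x k : ℕ) : ℝ) = ∏ k ∈ S, r k 1 := by
  calc ∑ x : ι → Fin 2, (∏ k, r k (x k)) * ∏ k ∈ S, ((x k : ℕ) : ℝ)
      = ∑ x : ι → Fin 2, ∏ k, r k (x k) * (if k ∈ S then ((x k : ℕ) : ℝ) else 1) := by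
        refine sum_congr rfl fun x _ => ?_
        rw [prod_mul_distrib, prod_ite_mem, univ_inter]
    _ = ∏ k, ∑ a, r k a * (if k ∈ S then ((a : ℕ) : ℝ) else 1) :=
        (Fintype.prod_sum fun k (a : Fin 2) => r k a * if k ∈ S then ((a : ℕ) : ℝ) else 1).symm
    _ = ∏ k, if k ∈ S then r k 1 else 1 := by
        refine prod_congr rfl fun k _ => ?_
        split_ifs <;> simp [Fin.sum_univ_two, hr]
    _ = ∏ k ∈ S, r k 1 := by rw [prod_ite_mem, univ_inter]

lemma sum_tripodJoint_mul_prod (π : Fin 2 → ℝ) (q : Fin 3 → Fin 2 → Fin 2 → ℝ)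
    (hq1 : ∀ i h, q i 0 h + q i 1 h = 1) (S : Finset (Fin 3)) :
    ∑ x, tripodJoint π q x * ∏ k ∈ S, ((x k : ℕ) : ℝ) = ∑ h, π h * ∏ k ∈ S, q k 1 h := by
  simp_rw [tripodJoint, sum_mul, mul_assoc]
  rw [sum_comm]
  simp_rw [← mul_sum, sum_prod_mul_prod_val (fun k a => q k a _) (fun k => hq1 k _)]

lemma cov3_eq_sub (p : (Fin 3 → Fin 2) → ℝ) (hp : ∑ x, p x = 1) (i j : Fin 3) :
    cov3 p i j = ∑ x, p x * ((x i : ℕ) : ℝ) * ((x j : ℕ) : ℝ) - EV3 p i * EV3 p j := by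
  have expand : ∀ x, p x * (((x i : ℕ) : ℝ) - EV3 p i) * (((x j : ℕ) : ℝ) - EV3 p j) =
      p x * ((x i : ℕ) : ℝ) * ((x j : ℕ) : ℝ) - EV3 p j * (p x * ((x i : ℕ) : ℝ))
        - EV3 p i * (p x * ((x j : ℕ) : ℝ)) + EV3 p i * EV3 p j * p x := fun x => by ring
  simp only [cov3, expand, sum_add_distrib, sum_sub_distrib, ← mul_sum, hp, ← EV3.eq_1]
  ring

lemma cov3_tripodJoint (π : Fin 2 → ℝ) (q : Fin 3 → Fin 2 → Fin 2 → ℝ) (hπ1 : π 0 + π 1 = 1)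
    (hq1 : ∀ i h, q i 0 h + q i 1 h = 1) {i j : Fin 3} (hij : i ≠ j) :
    cov3 (tripodJoint π q) i j = π 0 * π 1 * ((q i 1 0 - q i 1 1) * (q j 1 0 - q j 1 1)) := by
  have mass : ∑ x, tripodJoint π q x = 1 := by
    simpa [hπ1] using sum_tripodJoint_mul_prod π q hq1 ∅
  have mean : ∀ k, EV3 (tripodJoint π q) k = ∑ h, π h * q k 1 h := fun k => by
    simpa [EV3] using sum_tripodJoint_mul_prod π q hq1 {k}
  have moment : ∑ x, tripodJoint π q x * ((x i : ℕ) : ℝ) * ((x j : ℕ) : ℝ)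
      = ∑ h, π h * (q i 1 h * q j 1 h) := by
    simpa [prod_pair hij, mul_assoc] using sum_tripodJoint_mul_prod π q hq1 {i, j}
  rw [cov3_eq_sub _ mass, moment, mean, mean]
  simp only [Fin.sum_univ_two, eq_sub_of_add_eq hπ1]
  ring

theorem tripod_cov_product_nonneg_general (π : Fin 2 → ℝ) (q : Fin 3 → Fin 2 → Fin 2 → ℝ)
    (hπ : ∀ h, 0 ≤ π h) (hπ1 : π 0 + π 1 = 1)
    (hq1 : ∀ i h, q i 0 h + q i 1 h = 1)
    (p : (Fin 3 → Fin 2) → ℝ) (hp : p = tripodJoint π q) :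
    0 ≤ cov3 p 0 1 * cov3 p 0 2 * cov3 p 1 2 := by
  subst hp
  rw [cov3_tripodJoint π q hπ1 hq1 (by decide), cov3_tripodJoint π q hπ1 hq1 (by decide),
    cov3_tripodJoint π q hπ1 hq1 (by decide)]
  calc (0 : ℝ)
      ≤ (π 0 * π 1) ^ 3 * ((q 0 1 0 - q 0 1 1) * (q 1 1 0 - q 1 1 1) * (q 2 1 0 - q 2 1 1)) ^ 2 :=
        mul_nonneg (pow_nonneg (mul_nonneg (hπ 0) (hπ 1)) 3) (sq_nonneg _)
    _ = _ := by ring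

/-- In the tripod model the product of the three pairwise covariances
is nonnegative. -/
theorem tripod_cov_product_nonneg (π : Fin 2 → ℝ) (q : Fin 3 → Fin 2 → Fin 2 → ℝ)
    (hπ : ∀ h, 0 ≤ π h) (hπ1 : π 0 + π 1 = 1)
    (hq : ∀ i a h, 0 ≤ q i a h) (hq1 : ∀ i h, q i 0 h + q i 1 h = 1)
    (p : (Fin 3 → Fin 2) → ℝ) (hp : p = tripodJoint π q) :
    0 ≤ cov3 p 0 1 * cov3 p 0 2 * cov3 p 1 2 :=
  tripod_cov_product_nonneg_general π q hπ hπ1 hq1 p hp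
end

section
/- Let μ_{12}, μ_{13}, μ_{23}, μ_{123}, μ̄_1, μ̄_2, μ̄_3 be real numbers (with λ_i = (1−μ̄_i)/2 ∈ [0,1]), arising as the central moments and means of some joint probability distribution P on {0,1}³. Set Det P = μ_{123}² + 4μ_{12}μ_{13}μ_{23}. Suppose: (i) μ_{12}μ_{13}μ_{23} ≥ 0; (ii) μ_{12}²μ_{13}² + μ_{12}²μ_{23}² + μ_{13}²μ_{23}² ≤ Det P ≤ min_{i<j} μ_{ij}²; (iii) Det P ≤ ((1 ± μ̄_i)μ_{jk} ∓ μ_{123})² for all i and {j,k} = {1,2,3}∖{i} (both sign choices). If Det P > 0, then setting μ̄_h² = μ_{123}²/Det P and η_{h,i}² = Det P / μ_{jk}², one has μ̄_h² ∈ [0,1], and there exists a choice of signs for μ̄_h and η_{h,1}, η_{h,2}, η_{h,3} such that μ_{ij} = ¼(1−μ̄_h²)η_{h,i}η_{h,j} for all i<j and μ_{123} = ¼(1−μ̄_h²)μ̄_h η_{h,1}η_{h,2}η_{h,3}. -/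
open Finset

/-!
With `s = √Det P`, take `μ̄_h = μ₁₂₃ / s` and `η_{h,i} = s / μ_{jk}`. The identity
`Det P = μ₁₂₃² + 4 μ₁₂ μ₁₃ μ₂₃` says exactly `1 - μ̄_h² = 4 μ₁₂ μ₁₃ μ₂₃ / s²`, after which each
monomial of the parametrization collapses to the corresponding moment; this choice of `η`
automatically carries the correct signs. The bound `μ̄_h² ≤ 1` is `μ₁₂ μ₁₃ μ₂₃ ≥ 0`.
-/

theorem sq_div_sq_add_mem_Icc (a c : ℝ) (hc : 0 ≤ c) :
    a ^ 2 / (a ^ 2 + c) ∈ Set.Icc (0 : ℝ) 1 :=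
  ⟨by positivity, div_le_one_of_le₀ (by linarith) (by positivity)⟩

section Parametrization

variable {K : Type*} [Field K] {m12 m13 m23 m123 s : K}

theorem one_sub_div_sq_eq (hs0 : s ≠ 0) (hs : s ^ 2 = m123 ^ 2 + 4 * m12 * m13 * m23) :
    1 - (m123 / s) ^ 2 = 4 * m12 * m13 * m23 / s ^ 2 := by
  field_simp
  linear_combination hs

theorem tripod_monomial_parametrization [CharZero K]
    (h12 : m12 ≠ 0) (h13 : m13 ≠ 0) (h23 : m23 ≠ 0) (hs0 : s ≠ 0)
    (hs : s ^ 2 = m123 ^ 2 + 4 * m12 * m13 * m23) :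
    m12 = 1 / 4 * (1 - (m123 / s) ^ 2) * (s / m23) * (s / m13) ∧
      m13 = 1 / 4 * (1 - (m123 / s) ^ 2) * (s / m23) * (s / m12) ∧
      m23 = 1 / 4 * (1 - (m123 / s) ^ 2) * (s / m13) * (s / m12) ∧
      m123 = 1 / 4 * (1 - (m123 / s) ^ 2) * (m123 / s) * (s / m23) * (s / m13) * (s / m12) := by
  rw [one_sub_div_sq_eq hs0 hs]
  refine ⟨?_, ?_, ?_, ?_⟩ <;> field_simp

end Parametrization

theorem ne_zero_of_lt_of_le_sq {D a : ℝ} (hD : 0 < D) (h : D ≤ a ^ 2) : a ≠ 0 := by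
  rintro rfl
  linarith [zero_pow two_ne_zero (M₀ := ℝ)]

theorem tripod_reconstruction_general (m12 m13 m23 m123 DetP : ℝ)
    (hDet : DetP = m123 ^ 2 + 4 * m12 * m13 * m23)
    (h1 : 0 ≤ m12 * m13 * m23)
    (h2' : DetP ≤ min (min (m12 ^ 2) (m13 ^ 2)) (m23 ^ 2))
    (hpos : 0 < DetP) :
    m123 ^ 2 / DetP ∈ Set.Icc (0:ℝ) 1 ∧
      ∃ mh e1 e2 e3 : ℝ,
        mh ^ 2 = m123 ^ 2 / DetP ∧
        e1 ^ 2 = DetP / m23 ^ 2 ∧ e2 ^ 2 = DetP / m13 ^ 2 ∧ e3 ^ 2 = DetP / m12 ^ 2 ∧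
        m12 = 1 / 4 * (1 - mh ^ 2) * e1 * e2 ∧
        m13 = 1 / 4 * (1 - mh ^ 2) * e1 * e3 ∧
        m23 = 1 / 4 * (1 - mh ^ 2) * e2 * e3 ∧
        m123 = 1 / 4 * (1 - mh ^ 2) * mh * e1 * e2 * e3 := by
  simp only [le_min_iff] at h2'
  obtain ⟨⟨h12, h13⟩, h23⟩ := h2'
  have hs : √DetP ^ 2 = DetP := Real.sq_sqrt hpos.le
  have hs0 : √DetP ≠ 0 := (Real.sqrt_pos.mpr hpos).ne'
  refine ⟨hDet ▸ sq_div_sq_add_mem_Icc _ _ (by linarith),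
    m123 / √DetP, √DetP / m23, √DetP / m13, √DetP / m12,
    by rw [div_pow, hs], by rw [div_pow, hs], by rw [div_pow, hs], by rw [div_pow, hs], ?_⟩
  exact tripod_monomial_parametrization (ne_zero_of_lt_of_le_sq hpos h12)
    (ne_zero_of_lt_of_le_sq hpos h13) (ne_zero_of_lt_of_le_sq hpos h23) hs0 (hs.trans hDet)

/-- (Constructive direction of the semialgebraic description of the
tripod model.) Given moments of a joint distribution on `{0,1}³` satisfying the tripod
inequalities with `Det P > 0`, one has `μ_{123}²/Det P ∈ [0,1]` and there is a choice of
signs of the parameters `μ̄_h, η_{h,1}, η_{h,2}, η_{h,3}` (whose squares are determined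
by the moments) realizing the monomial parametrization. -/
theorem tripod_reconstruction (m12 m13 m23 m123 b1 b2 b3 DetP : ℝ)
    (hl1 : (1 - b1) / 2 ∈ Set.Icc (0:ℝ) 1) (hl2 : (1 - b2) / 2 ∈ Set.Icc (0:ℝ) 1)
    (hl3 : (1 - b3) / 2 ∈ Set.Icc (0:ℝ) 1)
    (hdist : ∃ p : (Fin 3 → Fin 2) → ℝ, (∀ x, 0 ≤ p x) ∧ (∑ x : Fin 3 → Fin 2, p x = 1) ∧
      EV3 p 0 = (1 - b1) / 2 ∧ EV3 p 1 = (1 - b2) / 2 ∧ EV3 p 2 = (1 - b3) / 2 ∧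
      cov3 p 0 1 = m12 ∧ cov3 p 0 2 = m13 ∧ cov3 p 1 2 = m23 ∧ thirdCentral3 p = m123)
    (hDet : DetP = m123 ^ 2 + 4 * m12 * m13 * m23)
    (h1 : 0 ≤ m12 * m13 * m23)
    (h2 : m12 ^ 2 * m13 ^ 2 + m12 ^ 2 * m23 ^ 2 + m13 ^ 2 * m23 ^ 2 ≤ DetP)
    (h2' : DetP ≤ min (min (m12 ^ 2) (m13 ^ 2)) (m23 ^ 2))
    (h3a : DetP ≤ ((1 + b1) * m23 - m123) ^ 2) (h3a' : DetP ≤ ((1 - b1) * m23 + m123) ^ 2)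
    (h3b : DetP ≤ ((1 + b2) * m13 - m123) ^ 2) (h3b' : DetP ≤ ((1 - b2) * m13 + m123) ^ 2)
    (h3c : DetP ≤ ((1 + b3) * m12 - m123) ^ 2) (h3c' : DetP ≤ ((1 - b3) * m12 + m123) ^ 2)
    (hpos : 0 < DetP) :
    m123 ^ 2 / DetP ∈ Set.Icc (0:ℝ) 1 ∧
      ∃ mh e1 e2 e3 : ℝ,
        mh ^ 2 = m123 ^ 2 / DetP ∧
        e1 ^ 2 = DetP / m23 ^ 2 ∧ e2 ^ 2 = DetP / m13 ^ 2 ∧ e3 ^ 2 = DetP / m12 ^ 2 ∧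
        m12 = 1 / 4 * (1 - mh ^ 2) * e1 * e2 ∧
        m13 = 1 / 4 * (1 - mh ^ 2) * e1 * e3 ∧
        m23 = 1 / 4 * (1 - mh ^ 2) * e2 * e3 ∧
        m123 = 1 / 4 * (1 - mh ^ 2) * mh * e1 * e2 * e3 :=
  tripod_reconstruction_general m12 m13 m23 m123 DetP hDet h1 h2' hpos
end

section
/- Let (Y_v)_{v∈V} be a Markov process on a rooted tree with binary variables, and suppose all variances Var(Y_v) > 0. For leaves i, j let ρ_{ij} = Corr(Y_i, Y_j) and for each edge (u,v) let ρ_{uv} = Corr(Y_u, Y_v). Then ρ_{ij} = ∏_{(u,v) ∈ E(ij)} ρ_{uv}, i.e., the correlation between two leaves is the product of edge correlations along the path joining them. -/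
open Finset

variable {V : Type*}

/-- Joint distribution of a Markov process on a rooted tree. -/
noncomputable def treeJoint [Fintype V] [DecidableEq V] (r : V) (pa : V → V)
    (θr : Fin 2 → ℝ) (θ : V → Fin 2 → Fin 2 → ℝ) : (V → Fin 2) → ℝ :=
  fun α => θr (α r) * ∏ v ∈ Finset.univ.erase r, θ v (α v) (α (pa v))

noncomputable def tEV [Fintype V] [DecidableEq V] (p : (V → Fin 2) → ℝ) (u : V) : ℝ :=
  ∑ α : V → Fin 2, p α * ((α u : ℕ) : ℝ)

noncomputable def tCov [Fintype V] [DecidableEq V] (p : (V → Fin 2) → ℝ) (u v : V) : ℝ :=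
  ∑ α : V → Fin 2, p α * (((α u : ℕ) : ℝ) - tEV p u) * (((α v : ℕ) : ℝ) - tEV p v)

noncomputable def tVar [Fintype V] [DecidableEq V] (p : (V → Fin 2) → ℝ) (u : V) : ℝ :=
  tCov p u u

/-- `Corr(Y_u, Y_v) = Cov(Y_u,Y_v)/√(Var Y_u · Var Y_v)`. -/
noncomputable def tCorr [Fintype V] [DecidableEq V] (p : (V → Fin 2) → ℝ) (u v : V) : ℝ :=
  tCov p u v / Real.sqrt (tVar p u * tVar p v)

set_option linter.unusedSectionVars false

namespace TreeAux

variable {V : Type*}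

/-- `x` is a descendant of `u` (including `u` itself). -/
def Desc (pa : V → V) (u x : V) : Prop := ∃ k, pa^[k] x = u

section Depth

variable {pa : V → V} {r : V} [DecidableEq V]

lemma iter_fixed {y : V} (h : pa y = y) : ∀ k, pa^[k] y = y := by
  intro k; induction k with
  | zero => rfl
  | succ n ih => rw [Function.iterate_succ_apply', ih, h]

lemma pa_fixed (htree : ∀ v, ∃ k, pa^[k] v = r) {y : V} (h : pa y = y) : y = r := by
  obtain ⟨k, hk⟩ := htree y
  rw [iter_fixed h k] at hk; exact hk

noncomputable def tdep (htree : ∀ v, ∃ k, pa^[k] v = r) (v : V) : ℕ := Nat.find (htree v)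

lemma tdep_spec (htree : ∀ v, ∃ k, pa^[k] v = r) (v : V) :
    pa^[tdep htree v] v = r := Nat.find_spec (htree v)

lemma tdep_min (htree : ∀ v, ∃ k, pa^[k] v = r) {v : V} {k : ℕ} (h : pa^[k] v = r) :
    tdep htree v ≤ k := Nat.find_min' (htree v) h

lemma tdep_pos (htree : ∀ v, ∃ k, pa^[k] v = r) {v : V} (hv : v ≠ r) :
    0 < tdep htree v := by
  rcases Nat.eq_zero_or_pos (tdep htree v) with h | h
  · exfalso; apply hv; have := tdep_spec htree v; rwa [h] at this
  · exact h

lemma tdep_child (htree : ∀ v, ∃ k, pa^[k] v = r) (hroot : pa r = r) {c x : V}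
    (hcx : pa c = x) (hx : x ≠ r) :
    tdep htree c = tdep htree x + 1 := by
  have hc : c ≠ r := by rintro rfl; rw [hroot] at hcx; exact hx hcx.symm
  have h1 : tdep htree c ≤ tdep htree x + 1 := by
    apply tdep_min
    rw [Function.iterate_succ_apply, hcx]; exact tdep_spec htree x
  have h0 : 0 < tdep htree c := tdep_pos htree hc
  obtain ⟨n, hn⟩ := Nat.exists_eq_succ_of_ne_zero h0.ne'
  have h2 : tdep htree x ≤ n := by
    apply tdep_min
    have := tdep_spec htree c
    rw [hn, Function.iterate_succ_apply, hcx] at this; exact this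
  omega

lemma tdep_pa_le (htree : ∀ v, ∃ k, pa^[k] v = r) (hroot : pa r = r) (v : V) :
    tdep htree (pa v) ≤ tdep htree v := by
  by_cases hv : v = r
  · subst hv; rw [hroot]
  · obtain ⟨n, hn⟩ := Nat.exists_eq_succ_of_ne_zero (tdep_pos htree hv).ne'
    have h2 : tdep htree (pa v) ≤ n := by
      apply tdep_min
      have := tdep_spec htree v
      rw [hn, Function.iterate_succ_apply] at this; exact this
    omega

lemma tdep_pa_lt (htree : ∀ v, ∃ k, pa^[k] v = r) {v : V} (hv : v ≠ r) :
    tdep htree (pa v) < tdep htree v := by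
  obtain ⟨n, hn⟩ := Nat.exists_eq_succ_of_ne_zero (tdep_pos htree hv).ne'
  have h2 : tdep htree (pa v) ≤ n := by
    apply tdep_min
    have := tdep_spec htree v
    rw [hn, Function.iterate_succ_apply] at this; exact this
  omega

lemma tdep_iter_le (htree : ∀ v, ∃ k, pa^[k] v = r) (hroot : pa r = r) {u : V} :
    ∀ (k : ℕ) {x : V}, pa^[k] x = u → tdep htree u ≤ tdep htree x := by
  intro k
  induction k with
  | zero => intro x h; subst h; exact le_refl _
  | succ n ih =>
      intro x h
      rw [Function.iterate_succ_apply] at h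
      exact le_trans (ih h) (tdep_pa_le htree hroot x)

lemma tdep_iter_lt (htree : ∀ v, ∃ k, pa^[k] v = r) (hroot : pa r = r) {u : V}
    (hu : u ≠ r) {k : ℕ} {x : V}
    (h : pa^[k+1] x = u) : tdep htree u < tdep htree x := by
  rw [Function.iterate_succ_apply'] at h
  have hy : pa^[k] x ≠ r := by
    intro he; rw [he, hroot] at h; exact hu h.symm
  have h1 : tdep htree (pa^[k] x) = tdep htree u + 1 := tdep_child htree hroot h hu
  have h2 : tdep htree (pa^[k] x) ≤ tdep htree x := tdep_iter_le htree hroot k rfl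
  omega

lemma no_cycle (htree : ∀ v, ∃ k, pa^[k] v = r) (hroot : pa r = r) {u : V}
    (hu : u ≠ r) {k : ℕ} (h : pa^[k+1] u = u) : False :=
  lt_irrefl _ (tdep_iter_lt htree hroot hu h)

lemma desc_self (u : V) : Desc pa u u := ⟨0, rfl⟩

lemma desc_of_pa {u x : V} (h : Desc pa u (pa x)) : Desc pa u x := by
  obtain ⟨k, hk⟩ := h
  exact ⟨k + 1, by rw [Function.iterate_succ_apply]; exact hk⟩

lemma desc_trans {u v x : V} (h1 : Desc pa u v) (h2 : Desc pa v x) : Desc pa u x := by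
  obtain ⟨k, hk⟩ := h1; obtain ⟨m, hm⟩ := h2
  exact ⟨k + m, by rw [Function.iterate_add_apply, hm, hk]⟩

lemma desc_r (hroot : pa r = r) {u : V} (h : Desc pa u r) : u = r := by
  obtain ⟨k, hk⟩ := h; rw [iter_fixed hroot k] at hk; exact hk.symm

lemma not_desc_pa (htree : ∀ v, ∃ k, pa^[k] v = r) (hroot : pa r = r) {u : V}
    (hu : u ≠ r) : ¬ Desc pa u (pa u) := by
  rintro ⟨k, hk⟩
  exact no_cycle htree hroot hu (k := k)
    (by rw [Function.iterate_succ_apply]; exact hk)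

lemma desc_antisymm (htree : ∀ v, ∃ k, pa^[k] v = r) (hroot : pa r = r) {u b : V}
    (h1 : Desc pa u b) (h2 : Desc pa b u) : u = b := by
  obtain ⟨k, hk⟩ := h1; obtain ⟨m, hm⟩ := h2
  rcases k with _ | k
  · exact hk.symm
  · have hb : b = r := by
      by_contra hb
      have : pa^[(m + (k+1))] b = b := by
        rw [Function.iterate_add_apply, hk, hm]
      rw [show m + (k+1) = (m+k)+1 by omega] at this
      exact no_cycle htree hroot hb this
    subst hb
    rw [iter_fixed hroot] at hk
    rw [hk]

end Depth

section Sums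

variable [Fintype V] [DecidableEq V]

noncomputable def auxP (r x : V) (pa : V → V) (θr : Fin 2 → ℝ)
    (ϑ : V → Fin 2 → Fin 2 → ℝ) (α : V → Fin 2) : ℝ :=
  θr (α r) * ∏ v ∈ (Finset.univ.erase r).erase x, ϑ v (α v) (α (pa v))

lemma swap_sum (x : V) (H : (V → Fin 2) → Fin 2 → ℝ) :
    ∑ α : V → Fin 2, ∑ c : Fin 2, H α c
      = ∑ α : V → Fin 2, ∑ c : Fin 2, H (Function.update α x c) (α x) := by
  have hinv : Function.Involutive
      (fun z : (V → Fin 2) × Fin 2 => (Function.update z.1 x z.2, z.1 x)) := by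
    rintro ⟨α, c⟩
    simp [Function.update_idem]
  have key := Equiv.sum_comp hinv.toPerm (fun z : (V → Fin 2) × Fin 2 => H z.1 z.2)
  simp only [Function.Involutive.coe_toPerm, Fintype.sum_prod_type] at key
  exact key.symm

lemma treeJoint_factor (r x : V) (hx : x ≠ r) (pa : V → V) (θr : Fin 2 → ℝ)
    (ϑ : V → Fin 2 → Fin 2 → ℝ) (α : V → Fin 2) :
    treeJoint r pa θr ϑ α = ϑ x (α x) (α (pa x)) * auxP r x pa θr ϑ α := by
  unfold treeJoint auxP
  rw [← Finset.mul_prod_erase _ _ (Finset.mem_erase.2 ⟨hx, Finset.mem_univ x⟩)]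
  ring

lemma treeJoint_factor_update (r x : V) (hx : x ≠ r) (pa : V → V) (hpx : pa x ≠ x)
    (θr : Fin 2 → ℝ) (ϑ : V → Fin 2 → Fin 2 → ℝ)
    (hch : ∀ c, pa c = x → ∀ j k k', ϑ c j k = ϑ c j k') (α : V → Fin 2) (c : Fin 2) :
    treeJoint r pa θr ϑ (Function.update α x c) = ϑ x c (α (pa x)) * auxP r x pa θr ϑ α := by
  rw [treeJoint_factor r x hx]
  congr 1
  · rw [Function.update_self, Function.update_of_ne hpx]
  · unfold auxP
    congr 1
    · rw [Function.update_of_ne (Ne.symm hx)]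
    · apply Finset.prod_congr rfl
      intro v hv
      obtain ⟨hvx, hvr⟩ := Finset.mem_erase.1 hv
      rw [Function.update_of_ne hvx]
      by_cases hpv : pa v = x
      · have hu : Function.update α x c (pa v) = c := by rw [hpv]; exact Function.update_self _ _ _
        rw [hu]
        exact hch v hpv (α v) c (α (pa v))
      · rw [Function.update_of_ne hpv]

lemma core_sum (r x : V) (hx : x ≠ r) (pa : V → V) (hpx : pa x ≠ x)
    (θr : Fin 2 → ℝ) (ϑ : V → Fin 2 → Fin 2 → ℝ)
    (hch : ∀ c, pa c = x → ∀ j k k', ϑ c j k = ϑ c j k')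
    (g : Fin 2 → ℝ) (F : (V → Fin 2) → ℝ)
    (hF : ∀ α c, F (Function.update α x c) = F α) :
    ∑ α : V → Fin 2, treeJoint r pa θr ϑ α * g (α x) * F α
      = (1/2) * ∑ α : V → Fin 2, auxP r x pa θr ϑ α *
          (ϑ x 0 (α (pa x)) * g 0 + ϑ x 1 (α (pa x)) * g 1) * F α := by
  have h2 : (2:ℝ) * ∑ α : V → Fin 2, treeJoint r pa θr ϑ α * g (α x) * F α
      = ∑ α : V → Fin 2, auxP r x pa θr ϑ α *
          (ϑ x 0 (α (pa x)) * g 0 + ϑ x 1 (α (pa x)) * g 1) * F α := by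
    have e1 : ∑ α : V → Fin 2, ∑ _c : Fin 2, treeJoint r pa θr ϑ α * g (α x) * F α
        = (2:ℝ) * ∑ α : V → Fin 2, treeJoint r pa θr ϑ α * g (α x) * F α := by
      rw [Finset.mul_sum]
      apply Finset.sum_congr rfl
      intro α _
      rw [Finset.sum_const]
      simp
    rw [← e1, swap_sum x]
    apply Finset.sum_congr rfl
    intro α _
    have e2 : ∀ c : Fin 2, treeJoint r pa θr ϑ (Function.update α x c)
        * g ((Function.update α x c) x) * F (Function.update α x c)
        = ϑ x c (α (pa x)) * auxP r x pa θr ϑ α * g c * F α := by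
      intro c
      rw [treeJoint_factor_update r x hx pa hpx θr ϑ hch, hF, Function.update_self]
    rw [Fin.sum_univ_two, e2 0, e2 1]
    ring
  linarith

lemma auxP_congr (r x : V) (pa : V → V) (θr : Fin 2 → ℝ)
    (ϑ ϑ' : V → Fin 2 → Fin 2 → ℝ) (h : ∀ v, v ≠ x → ϑ' v = ϑ v) :
    auxP r x pa θr ϑ' = auxP r x pa θr ϑ := by
  funext α
  unfold auxP
  congr 1
  apply Finset.prod_congr rfl
  intro v hv
  rw [h v (Finset.mem_erase.1 hv).1]

lemma core_sum1 (r x : V) (hx : x ≠ r) (pa : V → V) (hpx : pa x ≠ x)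
    (θr : Fin 2 → ℝ) (ϑ : V → Fin 2 → Fin 2 → ℝ)
    (hch : ∀ c, pa c = x → ∀ j k k', ϑ c j k = ϑ c j k')
    (F : (V → Fin 2) → ℝ) (hF : ∀ α c, F (Function.update α x c) = F α) :
    ∑ α : V → Fin 2, treeJoint r pa θr ϑ α * F α
      = (1/2) * ∑ α : V → Fin 2, auxP r x pa θr ϑ α *
          (ϑ x 0 (α (pa x)) + ϑ x 1 (α (pa x))) * F α := by
  have h := core_sum r x hx pa hpx θr ϑ hch (fun _ => (1:ℝ)) F hF
  simp only [mul_one] at h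
  exact h

lemma erase_step (r x : V) (hx : x ≠ r) (pa : V → V) (hpx : pa x ≠ x)
    (θr : Fin 2 → ℝ) (ϑ : V → Fin 2 → Fin 2 → ℝ)
    (hch : ∀ c, pa c = x → ∀ j k k', ϑ c j k = ϑ c j k')
    (hnorm : ∀ k, ϑ x 0 k + ϑ x 1 k = 1)
    (ψ : Fin 2 → Fin 2 → ℝ) (hψ : ∀ k, ψ 0 k + ψ 1 k = 1)
    (F : (V → Fin 2) → ℝ) (hF : ∀ α c, F (Function.update α x c) = F α) :
    ∑ α : V → Fin 2, treeJoint r pa θr ϑ α * F α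
      = ∑ α : V → Fin 2, treeJoint r pa θr (Function.update ϑ x ψ) α * F α := by
  have hch' : ∀ c, pa c = x → ∀ j k k',
      (Function.update ϑ x ψ) c j k = (Function.update ϑ x ψ) c j k' := by
    intro c hc j k k'
    have hcx : c ≠ x := by rintro rfl; exact hpx hc
    rw [Function.update_of_ne hcx]
    exact hch c hc j k k'
  rw [core_sum1 r x hx pa hpx θr ϑ hch F hF,
    core_sum1 r x hx pa hpx θr (Function.update ϑ x ψ) hch' F hF,
    auxP_congr r x pa θr ϑ (Function.update ϑ x ψ)
      (fun v hv => Function.update_of_ne hv ψ ϑ)]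
  congr 1
  apply Finset.sum_congr rfl
  intro α _
  rw [Function.update_self, hnorm, hψ]

lemma subst_step (r x : V) (hx : x ≠ r) (pa : V → V) (hpx : pa x ≠ x)
    (θr : Fin 2 → ℝ) (ϑ : V → Fin 2 → Fin 2 → ℝ)
    (hch : ∀ c, pa c = x → ∀ j k k', ϑ c j k = ϑ c j k')
    (hnorm : ∀ k, ϑ x 0 k + ϑ x 1 k = 1)
    (g : Fin 2 → ℝ) (F : (V → Fin 2) → ℝ)
    (hF : ∀ α c, F (Function.update α x c) = F α) :
    ∑ α : V → Fin 2, treeJoint r pa θr ϑ α * g (α x) * F α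
      = ∑ α : V → Fin 2, treeJoint r pa θr ϑ α *
          (ϑ x 0 (α (pa x)) * g 0 + ϑ x 1 (α (pa x)) * g 1) * F α := by
  have hF' : ∀ α c, (fun β => (ϑ x 0 (β (pa x)) * g 0 + ϑ x 1 (β (pa x)) * g 1) * F β)
      (Function.update α x c)
      = (fun β => (ϑ x 0 (β (pa x)) * g 0 + ϑ x 1 (β (pa x)) * g 1) * F β) α := by
    intro α c
    simp only [Function.update_of_ne hpx, hF]
  have e1 : ∑ α : V → Fin 2, treeJoint r pa θr ϑ α *
        (ϑ x 0 (α (pa x)) * g 0 + ϑ x 1 (α (pa x)) * g 1) * F α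
      = ∑ α : V → Fin 2, treeJoint r pa θr ϑ α *
        ((fun β => (ϑ x 0 (β (pa x)) * g 0 + ϑ x 1 (β (pa x)) * g 1) * F β) α) := by
    apply Finset.sum_congr rfl; intro α _; simp; ring
  rw [core_sum r x hx pa hpx θr ϑ hch g F hF, e1,
    core_sum1 r x hx pa hpx θr ϑ hch _ hF']
  congr 1
  apply Finset.sum_congr rfl
  intro α _
  beta_reduce
  rw [hnorm]
  ring

lemma marginalize (r : V) (pa : V → V) (hroot : pa r = r)
    (htree : ∀ v, ∃ k, pa^[k] v = r)
    (θr : Fin 2 → ℝ) (θ : V → Fin 2 → Fin 2 → ℝ) (hθ1 : ∀ v k, θ v 0 k + θ v 1 k = 1)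
    (D : Finset V) (hcl : ∀ c, pa c ∈ D → c ∈ D) (hr : r ∉ D)
    (F : (V → Fin 2) → ℝ) (hF : ∀ α x c, x ∈ D → F (Function.update α x c) = F α) :
    ∑ α : V → Fin 2, treeJoint r pa θr θ α * F α
      = ∑ α : V → Fin 2, treeJoint r pa θr
          (fun v => if v ∈ D then (fun _ _ => (1:ℝ)/2) else θ v) α * F α := by
  suffices H : ∀ n (E : Finset V), E ⊆ D → (D \ E).card = n →
      ∑ α : V → Fin 2, treeJoint r pa θr
          (fun v => if v ∈ E then (fun _ _ => (1:ℝ)/2) else θ v) α * F α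
        = ∑ α : V → Fin 2, treeJoint r pa θr
          (fun v => if v ∈ D then (fun _ _ => (1:ℝ)/2) else θ v) α * F α by
    have h0 := H (D \ ∅).card ∅ (Finset.empty_subset D) rfl
    have : (fun v => if v ∈ (∅ : Finset V) then (fun _ _ => (1:ℝ)/2) else θ v) = θ := by
      funext v; simp
    rwa [this] at h0
  intro n
  induction n with
  | zero =>
      intro E hE h0
      have : E = D := Finset.Subset.antisymm hE
        (by
          intro y hy
          by_contra hyE
          have : y ∈ D \ E := Finset.mem_sdiff.2 ⟨hy, hyE⟩
          rw [Finset.card_eq_zero.1 h0] at this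
          exact absurd this (Finset.notMem_empty y))
      rw [this]
  | succ n ih =>
      intro E hE hcard
      have hne : (D \ E).Nonempty := Finset.card_pos.1 (by omega)
      obtain ⟨x, hxmem, hxmax⟩ := Finset.exists_max_image (D \ E) (fun v => tdep htree v) hne
      obtain ⟨hxD, hxE⟩ := Finset.mem_sdiff.1 hxmem
      have hxr : x ≠ r := by rintro rfl; exact hr hxD
      have hpx : pa x ≠ x := fun h => hxr (pa_fixed htree h)
      -- children of x are already halved
      have hch : ∀ c, pa c = x → ∀ j k k',
          (fun v => if v ∈ E then (fun _ _ => (1:ℝ)/2) else θ v) c j k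
            = (fun v => if v ∈ E then (fun _ _ => (1:ℝ)/2) else θ v) c j k' := by
        intro c hc j k k'
        have hcD : c ∈ D := hcl c (hc ▸ hxD)
        have hcE : c ∈ E := by
          by_contra hcE
          have hmem : c ∈ D \ E := Finset.mem_sdiff.2 ⟨hcD, hcE⟩
          have hle := hxmax c hmem
          have : tdep htree c = tdep htree x + 1 := tdep_child htree hroot hc hxr
          omega
        simp [hcE]
      have hnorm : ∀ k, (fun v => if v ∈ E then (fun _ _ => (1:ℝ)/2) else θ v) x 0 k
          + (fun v => if v ∈ E then (fun _ _ => (1:ℝ)/2) else θ v) x 1 k = 1 := by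
        intro k; simp [hxE]; exact hθ1 x k
      have hstep := erase_step r x hxr pa hpx θr
        (fun v => if v ∈ E then (fun _ _ => (1:ℝ)/2) else θ v) hch hnorm
        (fun _ _ => (1:ℝ)/2) (fun k => by norm_num)
        F (fun α c => hF α x c hxD)
      have hupd : Function.update (fun v => if v ∈ E then (fun _ _ => (1:ℝ)/2) else θ v) x
          (fun _ _ => (1:ℝ)/2)
          = (fun v => if v ∈ insert x E then (fun _ _ => (1:ℝ)/2) else θ v) := by
        funext v
        by_cases hv : v = x
        · subst hv; rw [Function.update_self]; simp
        · rw [Function.update_of_ne hv]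
          simp [Finset.mem_insert, hv]
      rw [hstep, hupd]
      apply ih (insert x E) (Finset.insert_subset hxD hE)
      have hsd : D \ insert x E = (D \ E).erase x := by
        ext y
        simp only [Finset.mem_sdiff, Finset.mem_insert, Finset.mem_erase]
        tauto
      rw [hsd, Finset.card_erase_of_mem hxmem, hcard]
      omega

lemma sum_theta_r (r : V) (θr : Fin 2 → ℝ) (hθr1 : θr 0 + θr 1 = 1) :
    ∑ α : V → Fin 2, θr (α r) = 2 ^ (Fintype.card V) / 2 := by
  have h := swap_sum r (fun α (_ : Fin 2) => θr (α r))
  simp only [Function.update_self] at h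
  simp only [Finset.sum_const, Finset.card_univ, Fintype.card_fin] at h
  rw [Fin.sum_univ_two] at h
  rw [hθr1] at h
  have hc : Fintype.card (V → Fin 2) = 2 ^ Fintype.card V := by
    simp [Fintype.card_fun]
  rw [hc] at h
  simp only [smul_eq_mul, nsmul_eq_mul, mul_one] at h
  push_cast at h
  rw [← Finset.mul_sum] at h
  linarith

lemma sum_treeJoint (r : V) (pa : V → V) (hroot : pa r = r)
    (htree : ∀ v, ∃ k, pa^[k] v = r)
    (θr : Fin 2 → ℝ) (hθr1 : θr 0 + θr 1 = 1)
    (θ : V → Fin 2 → Fin 2 → ℝ) (hθ1 : ∀ v k, θ v 0 k + θ v 1 k = 1) :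
    ∑ α : V → Fin 2, treeJoint r pa θr θ α = 1 := by
  classical
  have hcl : ∀ c, pa c ∈ Finset.univ.erase r → c ∈ Finset.univ.erase r := by
    intro c hc
    refine Finset.mem_erase.2 ⟨?_, Finset.mem_univ _⟩
    rintro rfl
    rw [hroot] at hc
    exact (Finset.mem_erase.1 hc).1 rfl
  have hr : r ∉ Finset.univ.erase r := by simp
  have M := marginalize r pa hroot htree θr θ hθ1 (Finset.univ.erase r) hcl hr
    (fun _ => (1:ℝ)) (fun α x c _ => rfl)
  simp only [mul_one] at M
  rw [M]
  have hJ : ∀ α : V → Fin 2, treeJoint r pa θr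
      (fun v => if v ∈ Finset.univ.erase r then (fun _ _ => (1:ℝ)/2) else θ v) α
      = θr (α r) * (1/2) ^ (Fintype.card V - 1) := by
    intro α
    unfold treeJoint
    congr 1
    rw [Finset.prod_congr rfl (g := fun _ => (1:ℝ)/2)
      (fun v hv => by simp [hv])]
    rw [Finset.prod_const, Finset.card_erase_of_mem (Finset.mem_univ r),
      Finset.card_univ]
  rw [Finset.sum_congr rfl (fun α _ => hJ α), ← Finset.sum_mul,
    sum_theta_r r θr hθr1]
  have hpos : 1 ≤ Fintype.card V := Fintype.card_pos_iff.2 ⟨r⟩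
  have : (2:ℝ) ^ Fintype.card V = 2 * 2 ^ (Fintype.card V - 1) := by
    rw [← pow_succ']
    congr 1
    omega
  rw [this]
  rw [div_mul_eq_mul_div, mul_assoc, ← mul_pow]
  norm_num

lemma step_sum (r : V) (pa : V → V) (hroot : pa r = r)
    (htree : ∀ v, ∃ k, pa^[k] v = r)
    (θr : Fin 2 → ℝ) (θ : V → Fin 2 → Fin 2 → ℝ) (hθ1 : ∀ v k, θ v 0 k + θ v 1 k = 1)
    (u : V) (hu : u ≠ r)
    (Z : (V → Fin 2) → ℝ) (hZ : ∀ α x c, Desc pa u x → Z (Function.update α x c) = Z α) :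
    ∑ α : V → Fin 2, treeJoint r pa θr θ α * ((α u : ℕ) : ℝ) * Z α
      = θ u 1 0 * ∑ α : V → Fin 2, treeJoint r pa θr θ α * Z α
        + (θ u 1 1 - θ u 1 0) *
            ∑ α : V → Fin 2, treeJoint r pa θr θ α * ((α (pa u) : ℕ) : ℝ) * Z α := by
  classical
  set D : Finset V := Finset.univ.filter (fun x => Desc pa u x ∧ x ≠ u) with hD
  have hmemD : ∀ x, x ∈ D ↔ Desc pa u x ∧ x ≠ u := by
    intro x; simp [hD]
  have hcl : ∀ c, pa c ∈ D → c ∈ D := by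
    intro c hc
    obtain ⟨hdesc, hne⟩ := (hmemD (pa c)).1 hc
    refine (hmemD c).2 ⟨desc_of_pa hdesc, ?_⟩
    rintro rfl
    exact (not_desc_pa htree hroot hu) hdesc
  have hr : r ∉ D := by
    intro hrD
    exact hu (desc_r hroot ((hmemD r).1 hrD).1)
  have huD : u ∉ D := by
    intro hm; exact ((hmemD u).1 hm).2 rfl
  have hpuD : pa u ∉ D := by
    intro hm; exact (not_desc_pa htree hroot hu) ((hmemD (pa u)).1 hm).1
  have hpu : pa u ≠ u := fun h => hu (pa_fixed htree h)
  set κ : V → Fin 2 → Fin 2 → ℝ := fun v => if v ∈ D then (fun _ _ => (1:ℝ)/2) else θ v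
    with hκ
  have hκu : κ u = θ u := by rw [hκ]; simp [huD]
  set J := treeJoint r pa θr θ with hJ
  set K := treeJoint r pa θr κ with hK
  have hZu : ∀ α c, Z (Function.update α u c) = Z α := fun α c => hZ α u c (desc_self u)
  have hupd : ∀ (α : V → Fin 2) (x : V) (c : Fin 2) (v : V), x ∈ D → v ∉ D →
      Function.update α x c v = α v := by
    intro α x c v hx hv
    have : v ≠ x := by rintro rfl; exact hv hx
    exact Function.update_of_ne this c α
  have M1 : ∑ α : V → Fin 2, J α * (((α u : ℕ) : ℝ) * Z α)
      = ∑ α : V → Fin 2, K α * (((α u : ℕ) : ℝ) * Z α) := by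
    apply marginalize r pa hroot htree θr θ hθ1 D hcl hr
    intro α x c hx
    rw [hupd α x c u hx huD, hZ α x c ((hmemD x).1 hx).1]
  have M2 : ∑ α : V → Fin 2, J α * Z α = ∑ α : V → Fin 2, K α * Z α := by
    apply marginalize r pa hroot htree θr θ hθ1 D hcl hr
    intro α x c hx
    exact hZ α x c ((hmemD x).1 hx).1
  have M3 : ∑ α : V → Fin 2, J α * (((α (pa u) : ℕ) : ℝ) * Z α)
      = ∑ α : V → Fin 2, K α * (((α (pa u) : ℕ) : ℝ) * Z α) := by
    apply marginalize r pa hroot htree θr θ hθ1 D hcl hr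
    intro α x c hx
    rw [hupd α x c (pa u) hx hpuD, hZ α x c ((hmemD x).1 hx).1]
  have hch : ∀ c, pa c = u → ∀ j k k', κ c j k = κ c j k' := by
    intro c hc j k k'
    have hcD : c ∈ D := by
      refine (hmemD c).2 ⟨⟨1, by simpa using hc⟩, ?_⟩
      rintro rfl
      exact hu (pa_fixed htree hc)
    rw [hκ]; simp [hcD]
  have hnorm : ∀ k, κ u 0 k + κ u 1 k = 1 := by
    intro k; rw [hκu]; exact hθ1 u k
  have S := subst_step r u hu pa hpu θr κ hch hnorm
    (fun c : Fin 2 => ((c : ℕ) : ℝ)) Z hZu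
  simp only [hκu] at S
  have E : ∀ k : Fin 2, θ u 0 k * (((0 : Fin 2) : ℕ) : ℝ) + θ u 1 k * (((1 : Fin 2) : ℕ) : ℝ)
      = θ u 1 0 + (θ u 1 1 - θ u 1 0) * ((k : ℕ) : ℝ) := by
    intro k; fin_cases k <;> norm_num
  have S2 : ∑ α : V → Fin 2, K α * ((α u : ℕ) : ℝ) * Z α
      = θ u 1 0 * ∑ α : V → Fin 2, K α * Z α
        + (θ u 1 1 - θ u 1 0) * ∑ α : V → Fin 2, K α * (((α (pa u) : ℕ) : ℝ) * Z α) := by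
    rw [S]
    rw [Finset.sum_congr rfl (fun α _ => by rw [E (α (pa u))])]
    rw [Finset.mul_sum, Finset.mul_sum, ← Finset.sum_add_distrib]
    apply Finset.sum_congr rfl
    intro α _
    ring
  have a1 : ∑ α : V → Fin 2, J α * ((α u : ℕ) : ℝ) * Z α
      = ∑ α : V → Fin 2, J α * (((α u : ℕ) : ℝ) * Z α) := by
    apply Finset.sum_congr rfl; intros; ring
  have a1' : ∑ α : V → Fin 2, K α * (((α u : ℕ) : ℝ) * Z α)
      = ∑ α : V → Fin 2, K α * ((α u : ℕ) : ℝ) * Z α := by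
    apply Finset.sum_congr rfl; intros; ring
  have a3 : ∑ α : V → Fin 2, J α * ((α (pa u) : ℕ) : ℝ) * Z α
      = ∑ α : V → Fin 2, J α * (((α (pa u) : ℕ) : ℝ) * Z α) := by
    apply Finset.sum_congr rfl; intros; ring
  rw [a1, M1, a1', S2, ← M2, a3, M3]

lemma tCov_symm (p : (V → Fin 2) → ℝ) (u v : V) : tCov p u v = tCov p v u := by
  unfold tCov
  apply Finset.sum_congr rfl
  intros
  ring

lemma tCov_expand (p : (V → Fin 2) → ℝ) (hsum : ∑ α : V → Fin 2, p α = 1) (u v : V) :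
    tCov p u v = (∑ α : V → Fin 2, p α * (((α u : ℕ) : ℝ) * ((α v : ℕ) : ℝ)))
      - tEV p u * tEV p v := by
  unfold tCov
  have e : ∀ α : V → Fin 2, p α * (((α u : ℕ) : ℝ) - tEV p u) * (((α v : ℕ) : ℝ) - tEV p v)
      = p α * (((α u : ℕ) : ℝ) * ((α v : ℕ) : ℝ))
        - tEV p u * (p α * ((α v : ℕ) : ℝ)) - tEV p v * (p α * ((α u : ℕ) : ℝ))
        + tEV p u * tEV p v * p α := by
    intro α; ring
  rw [Finset.sum_congr rfl (fun α _ => e α)]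
  rw [Finset.sum_add_distrib, Finset.sum_sub_distrib, Finset.sum_sub_distrib,
    ← Finset.mul_sum, ← Finset.mul_sum, ← Finset.mul_sum, hsum]
  have hv : ∑ α : V → Fin 2, p α * ((α v : ℕ) : ℝ) = tEV p v := rfl
  have hu : ∑ α : V → Fin 2, p α * ((α u : ℕ) : ℝ) = tEV p u := rfl
  rw [hv, hu]
  ring

lemma cov_step (r : V) (pa : V → V) (hroot : pa r = r)
    (htree : ∀ v, ∃ k, pa^[k] v = r)
    (θr : Fin 2 → ℝ) (hθr1 : θr 0 + θr 1 = 1)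
    (θ : V → Fin 2 → Fin 2 → ℝ) (hθ1 : ∀ v k, θ v 0 k + θ v 1 k = 1)
    (u : V) (hu : u ≠ r) (v : V) (hv : ¬ Desc pa u v) :
    tCov (treeJoint r pa θr θ) u v
      = (θ u 1 1 - θ u 1 0) * tCov (treeJoint r pa θr θ) (pa u) v := by
  set J := treeJoint r pa θr θ with hJ
  have hsum : ∑ α : V → Fin 2, J α = 1 := sum_treeJoint r pa hroot htree θr hθr1 θ hθ1
  have hZv : ∀ (α : V → Fin 2) (x : V) (c : Fin 2), Desc pa u x →
      (fun β : V → Fin 2 => ((β v : ℕ) : ℝ)) (Function.update α x c)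
        = (fun β : V → Fin 2 => ((β v : ℕ) : ℝ)) α := by
    intro α x c hx
    have : v ≠ x := by rintro rfl; exact hv hx
    simp only [Function.update_of_ne this]
  have E1 := step_sum r pa hroot htree θr θ hθ1 u hu
    (fun β : V → Fin 2 => ((β v : ℕ) : ℝ)) hZv
  have E2 := step_sum r pa hroot htree θr θ hθ1 u hu (fun _ => (1:ℝ))
    (fun α x c _ => rfl)
  simp only [mul_one] at E2
  rw [hsum] at E2
  -- E2 : tEV J u = θ u 1 0 * 1 + η * tEV J (pa u)
  have eU : tEV J u = θ u 1 0 + (θ u 1 1 - θ u 1 0) * tEV J (pa u) := by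
    unfold tEV
    rw [E2]; ring
  have eA : ∑ α : V → Fin 2, J α * (((α u : ℕ) : ℝ) * ((α v : ℕ) : ℝ))
      = θ u 1 0 * tEV J v
        + (θ u 1 1 - θ u 1 0) *
            ∑ α : V → Fin 2, J α * (((α (pa u) : ℕ) : ℝ) * ((α v : ℕ) : ℝ)) := by
    have l1 : ∑ α : V → Fin 2, J α * (((α u : ℕ) : ℝ) * ((α v : ℕ) : ℝ))
        = ∑ α : V → Fin 2, J α * ((α u : ℕ) : ℝ) * ((α v : ℕ) : ℝ) := by
      apply Finset.sum_congr rfl; intros; ring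
    have l3 : ∑ α : V → Fin 2, J α * ((α (pa u) : ℕ) : ℝ) * ((α v : ℕ) : ℝ)
        = ∑ α : V → Fin 2, J α * (((α (pa u) : ℕ) : ℝ) * ((α v : ℕ) : ℝ)) := by
      apply Finset.sum_congr rfl; intros; ring
    rw [l1, E1, ← l3]
    rfl
  rw [tCov_expand J hsum u v, tCov_expand J hsum (pa u) v, eA, eU]
  ring

lemma sep_aux (r : V) (pa : V → V) (hroot : pa r = r)
    (htree : ∀ v, ∃ k, pa^[k] v = r)
    (θr : Fin 2 → ℝ) (hθr1 : θr 0 + θr 1 = 1)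
    (θ : V → Fin 2 → Fin 2 → ℝ) (hθ1 : ∀ v k, θ v 0 k + θ v 1 k = 1) (c : V) :
    ∀ n, ∀ b, tdep htree b ≤ n → Desc pa c b →
      ∃ h : ℝ,
        (∀ y, ¬ Desc pa c y →
          tCov (treeJoint r pa θr θ) y b = tCov (treeJoint r pa θr θ) y c * h) ∧
        tCov (treeJoint r pa θr θ) c b = tCov (treeJoint r pa θr θ) c c * h := by
  set J := treeJoint r pa θr θ with hJ
  intro n
  induction n with
  | zero =>
      intro b hdep hdesc
      by_cases hbc : b = c
      · subst hbc
        exact ⟨1, fun y _ => by rw [mul_one], by rw [mul_one]⟩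
      · exfalso
        have hbr : b ≠ r := by
          rintro rfl
          obtain ⟨k, hk⟩ := hdesc
          rw [iter_fixed hroot k] at hk
          exact hbc hk
        have := tdep_pos htree hbr
        omega
  | succ n ih =>
      intro b hdep hdesc
      by_cases hbc : b = c
      · subst hbc
        exact ⟨1, fun y _ => by rw [mul_one], by rw [mul_one]⟩
      · have hbr : b ≠ r := by
          rintro rfl
          obtain ⟨k, hk⟩ := hdesc
          rw [iter_fixed hroot k] at hk
          exact hbc hk
        have hdesc_pab : Desc pa c (pa b) := by
          obtain ⟨k, hk⟩ := hdesc
          rcases k with _ | k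
          · exact absurd hk hbc
          · rw [Function.iterate_succ_apply] at hk
            exact ⟨k, hk⟩
        have hdep' : tdep htree (pa b) ≤ n := by
          have := tdep_pa_lt htree hbr
          omega
        obtain ⟨h', P1, P2⟩ := ih (pa b) hdep' hdesc_pab
        refine ⟨(θ b 1 1 - θ b 1 0) * h', ?_, ?_⟩
        · intro y hy
          have hyb : ¬ Desc pa b y := fun hd => hy (desc_trans hdesc hd)
          rw [tCov_symm J y b,
            cov_step r pa hroot htree θr hθr1 θ hθ1 b hbr y hyb,
            tCov_symm J (pa b) y, P1 y hy]
          ring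
        · have hcb : ¬ Desc pa b c := by
            intro hd
            exact hbc (desc_antisymm htree hroot hdesc hd).symm
          rw [tCov_symm J c b,
            cov_step r pa hroot htree θr hθr1 θ hθ1 b hbr c hcb,
            tCov_symm J (pa b) c, P2]
          ring

lemma sep (r : V) (pa : V → V) (hroot : pa r = r)
    (htree : ∀ v, ∃ k, pa^[k] v = r)
    (θr : Fin 2 → ℝ) (hθr1 : θr 0 + θr 1 = 1)
    (θ : V → Fin 2 → Fin 2 → ℝ) (hθ1 : ∀ v k, θ v 0 k + θ v 1 k = 1)
    (a b c : V) (hb : Desc pa c b) (ha : ¬ Desc pa c a) :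
    tCov (treeJoint r pa θr θ) a b * tCov (treeJoint r pa θr θ) c c
      = tCov (treeJoint r pa θr θ) a c * tCov (treeJoint r pa θr θ) c b := by
  obtain ⟨h, P1, P2⟩ := sep_aux r pa hroot htree θr hθr1 θ hθ1 c (tdep htree b) b
    le_rfl hb
  rw [P1 a ha, P2]
  ring

lemma walk_desc {G : SimpleGraph V} {pa : V → V}
    (hGadj : ∀ a b, G.Adj a b → a ≠ b ∧ (pa b = a ∨ pa a = b)) :
    ∀ {x b : V} (q : G.Walk x b), q.support.Nodup → pa x ∉ q.support.tail →
      Desc pa x b := by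
  intro x b q
  induction q with
  | nil => intro _ _; exact desc_self _
  | @cons u v w hadj q ih =>
      intro hnodup htail
      rw [SimpleGraph.Walk.support_cons] at hnodup htail
      simp only [List.tail_cons] at htail
      have h1 : u ∉ q.support ∧ q.support.Nodup := by
        simpa using hnodup
      obtain ⟨huv, hor⟩ := hGadj _ _ hadj
      have hpv : pa v = u := by
        rcases hor with h | h
        · exact h
        · exact absurd (h ▸ q.start_mem_support) htail
      have hdesc : Desc pa v w := by
        apply ih h1.2
        rw [hpv]
        intro hmem
        exact h1.1 (List.tail_subset _ hmem)
      exact desc_trans ⟨1, by simpa using hpv⟩ hdesc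

lemma walk_cross {G : SimpleGraph V} {pa : V → V}
    (hGadj : ∀ a b, G.Adj a b → a ≠ b ∧ (pa b = a ∨ pa a = b)) {a : V} :
    ∀ {x y : V} (q : G.Walk x y), ¬ Desc pa a x → Desc pa a y → a ∈ q.support := by
  intro x y q
  induction q with
  | nil => intro hx hy; exact absurd hy hx
  | @cons u v w hadj q ih =>
      intro hx hy
      rw [SimpleGraph.Walk.support_cons]
      by_cases hz : Desc pa a v
      · obtain ⟨hne, hor⟩ := hGadj _ _ hadj
        rcases hor with h | h
        · obtain ⟨k, hk⟩ := hz
          rcases k with _ | k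
          · right
            rw [← hk]
            exact q.start_mem_support
          · exfalso
            apply hx
            rw [Function.iterate_succ_apply, h] at hk

            exact ⟨k, hk⟩
        · exfalso
          apply hx
          obtain ⟨k, hk⟩ := hz
          exact ⟨k + 1, by rw [Function.iterate_succ_apply, h]; exact hk⟩
      · right
        exact ih hz hy

lemma tCorr_self (p : (V → Fin 2) → ℝ) (a : V) (h : 0 < tVar p a) : tCorr p a a = 1 := by
  unfold tCorr
  rw [Real.sqrt_mul_self (le_of_lt h)]
  exact div_self h.ne'

lemma corr_helper (A B C va vc vj : ℝ) (hva : 0 < va) (hvc : 0 < vc) (hvj : 0 < vj)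
    (h : A * vc = B * C) :
    A / Real.sqrt (va * vj) = B / Real.sqrt (va * vc) * (C / Real.sqrt (vc * vj)) := by
  have h1 : Real.sqrt (va * vc) * Real.sqrt (vc * vj) = vc * Real.sqrt (va * vj) := by
    rw [← Real.sqrt_mul (by positivity)]
    rw [show va * vc * (vc * vj) = vc ^ 2 * (va * vj) by ring]
    rw [Real.sqrt_mul (by positivity), Real.sqrt_sq hvc.le]
  have hs1 : (0:ℝ) < Real.sqrt (va * vj) := Real.sqrt_pos.2 (by positivity)
  have hs2 : (0:ℝ) < Real.sqrt (va * vc) := Real.sqrt_pos.2 (by positivity)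
  have hs3 : (0:ℝ) < Real.sqrt (vc * vj) := Real.sqrt_pos.2 (by positivity)
  rw [div_mul_div_comm, h1]
  rw [div_eq_div_iff hs1.ne' (by positivity)]
  rw [← h]
  ring

lemma main_ind (r : V) (pa : V → V) (hroot : pa r = r)
    (htree : ∀ v, ∃ k, pa^[k] v = r)
    (θr : Fin 2 → ℝ) (hθr1 : θr 0 + θr 1 = 1)
    (θ : V → Fin 2 → Fin 2 → ℝ) (hθ1 : ∀ v k, θ v 0 k + θ v 1 k = 1)
    (p : (V → Fin 2) → ℝ) (hp : p = treeJoint r pa θr θ)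
    (hvar : ∀ v, 0 < tVar p v)
    (G : SimpleGraph V) (hGadj : ∀ a b, G.Adj a b → a ≠ b ∧ (pa b = a ∨ pa a = b))
    (j : V) :
    ∀ {a : V} (q : G.Walk a j), q.IsPath →
      tCorr p a j = (q.darts.map fun d => tCorr p d.fst d.snd).prod := by
  intro a q
  induction q with
  | nil =>
      intro _
      simp only [SimpleGraph.Walk.darts_nil, List.map_nil, List.prod_nil]
      exact tCorr_self p _ (hvar _)
  | @cons u c w hadj q ih =>
      intro hpath
      obtain ⟨hq, hnotmem⟩ := (SimpleGraph.Walk.cons_isPath_iff _ _).1 hpath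
      obtain ⟨hne, hor⟩ := hGadj _ _ hadj
      have hkey : tCov p u w * tCov p c c = tCov p u c * tCov p c w := by
        by_cases hpc : pa c = u
        · -- going down: c is a child of u
          have hcr : c ≠ r := by
            rintro rfl
            rw [hroot] at hpc
            exact hne hpc.symm
          have hac : ¬ Desc pa c u := by
            rintro ⟨k, hk⟩
            refine no_cycle htree hroot hcr (k := k) ?_
            rw [Function.iterate_succ_apply, hpc]
            exact hk
          have hdesc : Desc pa c w := by
            apply walk_desc hGadj q hq.support_nodup
            rw [hpc]
            intro hmem
            exact hnotmem (List.tail_subset _ hmem)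
          rw [hp]
          exact sep r pa hroot htree θr hθr1 θ hθ1 u w c hdesc hac
        · -- going up: u is a child of c
          have hpa : pa u = c := by
            rcases hor with h | h
            · exact absurd h hpc
            · exact h
          have har : u ≠ r := by
            rintro rfl
            rw [hroot] at hpa
            exact hne hpa
          have hna : ¬ Desc pa u c := by
            rintro ⟨k, hk⟩
            refine no_cycle htree hroot har (k := k) ?_
            rw [Function.iterate_succ_apply, hpa]
            exact hk
          have hnj : ¬ Desc pa u w := fun hd => hnotmem (walk_cross hGadj q hna hd)
          have cov1 : tCov p u w = (θ u 1 1 - θ u 1 0) * tCov p c w := by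
            rw [hp]
            have := cov_step r pa hroot htree θr hθr1 θ hθ1 u har w hnj
            rwa [hpa] at this
          have cov2 : tCov p u c = (θ u 1 1 - θ u 1 0) * tCov p c c := by
            rw [hp]
            have := cov_step r pa hroot htree θr hθr1 θ hθ1 u har c hna
            rwa [hpa] at this
          rw [cov1, cov2]
          ring
      rw [SimpleGraph.Walk.darts_cons, List.map_cons, List.prod_cons, ← ih hq]
      unfold tCorr
      exact corr_helper _ _ _ _ _ _ (hvar u) (hvar c) (hvar w) hkey

end Sums

end TreeAux

/-- For a Markov process on a rooted tree with binary variables, all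
variances positive, the correlation between two leaves is the product of the edge
correlations along the path joining them. -/
theorem treeMarkov_corr_path_product [Fintype V] [DecidableEq V]
    (r : V) (pa : V → V) (hroot : pa r = r) (htree : ∀ v, ∃ k, pa^[k] v = r)
    (θr : Fin 2 → ℝ) (θ : V → Fin 2 → Fin 2 → ℝ)
    (hθr : ∀ i, 0 ≤ θr i) (hθr1 : θr 0 + θr 1 = 1)
    (hθ : ∀ v j k, 0 ≤ θ v j k) (hθ1 : ∀ v k, θ v 0 k + θ v 1 k = 1)
    (p : (V → Fin 2) → ℝ) (hp : p = treeJoint r pa θr θ)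
    (hvar : ∀ v, 0 < tVar p v)
    (G : SimpleGraph V) (hG : G = SimpleGraph.fromRel fun a b => pa b = a)
    (i j : V) (hi : ∃! w, G.Adj i w) (hj : ∃! w, G.Adj j w)
    (w : G.Walk i j) (hw : w.IsPath) :
    tCorr p i j = (w.darts.map fun d => tCorr p d.fst d.snd).prod := by
  subst hG
  have hGadj : ∀ a b, (SimpleGraph.fromRel fun a b => pa b = a).Adj a b →
      a ≠ b ∧ (pa b = a ∨ pa a = b) := by
    intro a b hab
    rw [SimpleGraph.fromRel_adj] at hab
    exact hab
  exact TreeAux.main_ind r pa hroot htree θr hθr1 θ hθ1 p hp hvar _ hGadj j w hw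
end

section
/- Let Y_u, Y_v be {0,1}-valued random variables in a tree edge parametrization, with parameters μ̄_u = 1−2E[Y_u], μ̄_v = 1−2E[Y_v], and η_{u,v} = P(Y_v=1|Y_u=1) − P(Y_v=1|Y_u=0) (assuming 0 < P(Y_u=1) < 1). Then the conditional probabilities P(Y_v=j|Y_u=k) all lie in [0,1] if and only if: −(1+μ̄_v) ≤ (1−μ̄_u)η_{u,v} ≤ (1−μ̄_v) and −(1−μ̄_v) ≤ (1+μ̄_u)η_{u,v} ≤ (1+μ̄_v). -/
/-! Since `1 - μ̄_u = 2λ_u` and `1 + μ̄_u = 2(1 - λ_u)`, the four slacks of the inequalities are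
`2θ_{1|0}`, `2(1 - θ_{1|0})`, `2θ_{1|1}` and `2(1 - θ_{1|1})`: the marginal `λ_u` cancels and each
inequality is exactly one face of the box `[0,1]²`. -/

namespace EdgeParameter

variable {lu θ10 θ11 η lv mu mv : ℝ}

theorem neg_one_add_mv_le_iff (hη : η = θ11 - θ10) (hlv : lv = θ10 + η * lu)
    (hmu : mu = 1 - 2 * lu) (hmv : mv = 1 - 2 * lv) :
    -(1 + mv) ≤ (1 - mu) * η ↔ θ10 ≤ 1 := by
  subst hη hlv hmu hmv
  constructor <;> intro h <;> linarith

theorem le_one_sub_mv_iff (hη : η = θ11 - θ10) (hlv : lv = θ10 + η * lu)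
    (hmu : mu = 1 - 2 * lu) (hmv : mv = 1 - 2 * lv) :
    (1 - mu) * η ≤ 1 - mv ↔ 0 ≤ θ10 := by
  subst hη hlv hmu hmv
  constructor <;> intro h <;> linarith

theorem neg_one_sub_mv_le_iff (hη : η = θ11 - θ10) (hlv : lv = θ10 + η * lu)
    (hmu : mu = 1 - 2 * lu) (hmv : mv = 1 - 2 * lv) :
    -(1 - mv) ≤ (1 + mu) * η ↔ 0 ≤ θ11 := by
  subst hη hlv hmu hmv
  constructor <;> intro h <;> linarith

theorem le_one_add_mv_iff (hη : η = θ11 - θ10) (hlv : lv = θ10 + η * lu)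
    (hmu : mu = 1 - 2 * lu) (hmv : mv = 1 - 2 * lv) :
    (1 + mu) * η ≤ 1 + mv ↔ θ11 ≤ 1 := by
  subst hη hlv hmu hmv
  constructor <;> intro h <;> linarith

end EdgeParameter

theorem edge_parameter_box_general (lu θ10 θ11 : ℝ)
    (η lv mu mv : ℝ) (hη : η = θ11 - θ10) (hlv : lv = θ10 + η * lu)
    (hmu : mu = 1 - 2 * lu) (hmv : mv = 1 - 2 * lv) :
    ((0 ≤ θ10 ∧ θ10 ≤ 1) ∧ (0 ≤ θ11 ∧ θ11 ≤ 1)) ↔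
      (-(1 + mv) ≤ (1 - mu) * η ∧ (1 - mu) * η ≤ 1 - mv ∧
        -(1 - mv) ≤ (1 + mu) * η ∧ (1 + mu) * η ≤ 1 + mv) := by
  rw [EdgeParameter.neg_one_add_mv_le_iff hη hlv hmu hmv,
    EdgeParameter.le_one_sub_mv_iff hη hlv hmu hmv,
    EdgeParameter.neg_one_sub_mv_le_iff hη hlv hmu hmv,
    EdgeParameter.le_one_add_mv_iff hη hlv hmu hmv]
  tauto

/-- In the tree edge parametrization with `λ_u = P(Y_u=1) ∈ (0,1)`,
`η = θ^{(v)}_{1|1} − θ^{(v)}_{1|0}`, `λ_v = θ^{(v)}_{1|0} + η λ_u`, `μ̄_w = 1 − 2λ_w`,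
the conditional probabilities `θ^{(v)}_{1|0}, θ^{(v)}_{1|1}` lie in `[0,1]` if and only if
`−(1+μ̄_v) ≤ (1−μ̄_u)η ≤ 1−μ̄_v` and `−(1−μ̄_v) ≤ (1+μ̄_u)η ≤ 1+μ̄_v`. -/
theorem edge_parameter_box (lu θ10 θ11 : ℝ) (hlu0 : 0 < lu) (hlu1 : lu < 1)
    (η lv mu mv : ℝ) (hη : η = θ11 - θ10) (hlv : lv = θ10 + η * lu)
    (hmu : mu = 1 - 2 * lu) (hmv : mv = 1 - 2 * lv) :
    ((0 ≤ θ10 ∧ θ10 ≤ 1) ∧ (0 ≤ θ11 ∧ θ11 ≤ 1)) ↔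
      (-(1 + mv) ≤ (1 - mu) * η ∧ (1 - mu) * η ≤ 1 - mv ∧
        -(1 - mv) ≤ (1 + mu) * η ∧ (1 + mu) * η ≤ 1 + mv) :=
  edge_parameter_box_general lu θ10 θ11 η lv mu mv hη hlv hmu hmv
end

section
/- Let T be a trivalent tree with leaf set [n] rooted at r, and consider the monomial parametrization κ_I = ¼(1−μ̄_{r(I)}²) ∏_{v ∈ int(V(I))} μ̄_v^{deg(v)−2} ∏_{(u,v)∈E(I)} η_{u,v} for I ⊆ [n], |I| ≥ 2 (parameters μ̄_v ∈ [−1,1], η_{u,v} ∈ R). Then for every edge split A|B of [n] and all nonempty I1, I2 ⊆ A, J1, J2 ⊆ B: κ_{I1∪J1} κ_{I2∪J2} = κ_{I1∪J2} κ_{I2∪J1}. -/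
/-!
Let `e = s(w, w')` be the cut edge. In a tree a path avoids `e` exactly when its endpoints are
joined in `G - e`, so every vertex lies on the `w`-side or on the `w'`-side, and for `i ∈ A`,
`j ∈ B` the path from `ℓ i` to `ℓ j` is the path to `w`, then `e`, then the path from `w'`.
Hence `T(I ∪ J)` is the half-tree spanned by `I` and `w`, the edge `e`, and the half-tree spanned
by `J` and `w'`. A vertex has the same degree in `T(I ∪ J)` as in the half-tree on its side with
`e` attached, while in the other half (with `e` attached) its degree is at most `1`, so its
exponent there is `0`. The root `r(I ∪ J)` lies in the half containing `r` and depends only on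
that half. Thus `κ_{I ∪ J} = F(I) F'(J)`, which gives the quadratic relations.
-/

open Finset

variable {V : Type*} [Fintype V] [DecidableEq V] [LinearOrder V]

/-- `E(I)`: edge set of the minimal subtree `T(I)` spanning the leaves in `I`, given a
choice `pth` of (the unique) paths between vertices. -/
def spanEdges {G : SimpleGraph V} (pth : ∀ u v : V, G.Walk u v) {n : ℕ}
    (ℓ : Fin n → V) (I : Finset (Fin n)) : Finset (Sym2 V) :=
  I.biUnion fun i => I.biUnion fun j => (pth (ℓ i) (ℓ j)).edges.toFinset

/-- `V(I)`: vertex set of the minimal subtree `T(I)`. -/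
def spanVerts {G : SimpleGraph V} (pth : ∀ u v : V, G.Walk u v) {n : ℕ}
    (ℓ : Fin n → V) (I : Finset (Fin n)) : Finset V :=
  I.biUnion fun i => I.biUnion fun j => (pth (ℓ i) (ℓ j)).support.toFinset

/-- Degree of a vertex in `T(I)`. -/
def spanDeg {G : SimpleGraph V} (pth : ∀ u v : V, G.Walk u v) {n : ℕ}
    (ℓ : Fin n → V) (I : Finset (Fin n)) (v : V) : ℕ :=
  ((spanEdges pth ℓ I).filter fun e => v ∈ e).card

/-- `int(V(I))`: the inner (non-leaf) nodes of `T(I)`. -/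
def spanInner {G : SimpleGraph V} (pth : ∀ u v : V, G.Walk u v) {n : ℕ}
    (ℓ : Fin n → V) (I : Finset (Fin n)) : Finset V :=
  (spanVerts pth ℓ I).filter fun v => 2 ≤ spanDeg pth ℓ I v

/-- `r(I)`: the root of `T^r(I)`, i.e. the vertex of `T(I)` closest to `r`; it is the
unique vertex of `T(I)` lying on every path from `r` to a leaf in `I`. -/
def spanRoot {G : SimpleGraph V} (r : V) (pth : ∀ u v : V, G.Walk u v) {n : ℕ}
    (ℓ : Fin n → V) (I : Finset (Fin n)) : V :=
  let s := (spanVerts pth ℓ I).filter fun v => ∀ i ∈ I, v ∈ (pth r (ℓ i)).support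
  if h : s.Nonempty then s.min' h else r

namespace SimpleGraph

section
variable {V : Type*} {G : SimpleGraph V}

theorem Reachable.deleteEdges_or {v u u' : V} (h : G.Reachable v u) :
    (G.deleteEdges {s(u, u')}).Reachable v u ∨ (G.deleteEdges {s(u, u')}).Reachable v u' := by
  obtain ⟨p⟩ := h
  induction p with
  | nil => exact .inl .rfl
  | @cons v x u hvx p ih =>
    by_cases hx : s(v, x) = s(u, u')
    · rcases Sym2.eq_iff.mp hx with ⟨rfl, -⟩ | ⟨rfl, -⟩
      · exact .inl .rfl
      · exact .inr .rfl
    · have hH : (G.deleteEdges {s(u, u')}).Adj v x := by simp [hvx, hx]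
      exact ih.imp hH.reachable.trans hH.reachable.trans

theorem IsAcyclic.eq_of_isPath (hG : G.IsAcyclic) {u v : V} {p q : G.Walk u v}
    (hp : p.IsPath) (hq : q.IsPath) : p = q :=
  congrArg Subtype.val ((hG.subsingleton_path u v).elim ⟨p, hp⟩ ⟨q, hq⟩)

theorem IsAcyclic.eq_bypass_of_isPath [DecidableEq V] (hG : G.IsAcyclic) {u v : V}
    {p : G.Walk u v} (hp : p.IsPath) (q : G.Walk u v) : p = q.bypass :=
  hG.eq_of_isPath hp q.bypass_isPath

theorem IsAcyclic.notMem_edges_iff_reachable_deleteEdges (hG : G.IsAcyclic) {e : Sym2 V}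
    {u v : V} {p : G.Walk u v} (hp : p.IsPath) :
    e ∉ p.edges ↔ (G.deleteEdges {e}).Reachable u v := by
  classical
  induction e with | h x y => ?_
  rw [reachable_deleteEdges_iff_exists_walk]
  refine ⟨fun h ↦ ⟨p, h⟩, fun ⟨q, hq⟩ hpe ↦ hq ?_⟩
  exact q.edges_bypass_subset_edges (hG.eq_bypass_of_isPath hp q ▸ hpe)

theorem IsAcyclic.reachable_deleteEdges_of_mem_support (hG : G.IsAcyclic) {e : Sym2 V}
    {u v x : V} {p : G.Walk u v} (hp : p.IsPath) (h : (G.deleteEdges {e}).Reachable u v)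
    (hx : x ∈ p.support) : (G.deleteEdges {e}).Reachable x v := by
  classical
  have hpe := (hG.notMem_edges_iff_reachable_deleteEdges hp).mpr h
  induction e with | h y z => ?_
  exact reachable_deleteEdges_iff_exists_walk.mpr
    ⟨p.dropUntil x hx, fun h ↦ hpe (p.edges_dropUntil_subset_edges hx h)⟩

theorem IsAcyclic.not_reachable_deleteEdges (hG : G.IsAcyclic) {e : Sym2 V} {v w w' : V}
    (hadj : G.Adj w w') (he : s(w, w') = e) (h : (G.deleteEdges {e}).Reachable v w) :
    ¬ (G.deleteEdges {e}).Reachable v w' := by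
  subst he
  exact fun h' ↦ isBridge_iff.mp (isAcyclic_iff_forall_adj_isBridge.mp hG hadj) (h.symm.trans h')

theorem IsAcyclic.eq_append_cons_reverse (hG : G.IsAcyclic) {e : Sym2 V} {u x w w' : V}
    (hadj : G.Adj w w') (he : s(w, w') = e) {p : G.Walk u x} {p₁ : G.Walk u w}
    {p₂ : G.Walk x w'} (hp : p.IsPath) (hp₁ : p₁.IsPath) (hp₂ : p₂.IsPath)
    (hu : (G.deleteEdges {e}).Reachable u w) (hx : (G.deleteEdges {e}).Reachable x w') :
    p = p₁.append (Walk.cons hadj p₂.reverse) := by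
  refine hG.eq_of_isPath hp ?_
  rw [Walk.isPath_def, Walk.support_append, Walk.support_cons, List.tail_cons,
    Walk.support_reverse, List.nodup_append]
  refine ⟨hp₁.support_nodup, List.nodup_reverse.mpr hp₂.support_nodup, ?_⟩
  rintro a ha b hb rfl
  rw [List.mem_reverse] at hb
  exact hG.not_reachable_deleteEdges hadj he
    (hG.reachable_deleteEdges_of_mem_support hp₁ hu ha)
    (hG.reachable_deleteEdges_of_mem_support hp₂ hx hb)

theorem forall_reachable_of_separated {ι : Type*} {w w' : V}
    (hcover : ∀ v, G.Reachable v w ∨ G.Reachable v w') {ℓ : ι → V} {A B : Finset ι}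
    (hsep : ∀ i ∈ A, ∀ j ∈ B, ¬ G.Reachable (ℓ i) (ℓ j)) {i₀ j₀ : ι} (hi₀ : i₀ ∈ A)
    (hj₀ : j₀ ∈ B) (h₀ : G.Reachable (ℓ i₀) w) :
    (∀ i ∈ A, G.Reachable (ℓ i) w) ∧ ∀ j ∈ B, G.Reachable (ℓ j) w' := by
  have hj₀w' : G.Reachable (ℓ j₀) w' :=
    (hcover _).resolve_left fun h ↦ hsep _ hi₀ _ hj₀ (h₀.trans h.symm)
  exact ⟨fun i hi ↦ (hcover _).resolve_right fun h ↦ hsep _ hi _ hj₀ (h.trans hj₀w'.symm),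
    fun j hj ↦ (hcover _).resolve_left fun h ↦ hsep _ hi₀ _ hj (h₀.trans h.symm)⟩

end

end SimpleGraph

theorem Finset.card_filter_insert_union_sub_two {α : Type*} [DecidableEq α] (p : α → Prop)
    [DecidablePred p] (a : α) (s t : Finset α) (ht : ∀ x ∈ t, ¬ p x) :
    #((insert a (s ∪ t)).filter p) - 2 =
      #((insert a s).filter p) - 2 + (#((insert a t).filter p) - 2) := by
  have hst : (insert a (s ∪ t)).filter p = (insert a s).filter p := by
    rw [← insert_union, filter_union, filter_false_of_mem ht, union_empty]
  have ht1 : #((insert a t).filter p) ≤ 1 := by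
    rw [filter_insert, filter_false_of_mem ht]
    split_ifs <;> simp
  rw [hst]
  omega

open SimpleGraph

section CutEdge

variable {V : Type*} [DecidableEq V]

def spanEdgesTo {G : SimpleGraph V} (pth : ∀ u v : V, G.Walk u v) {n : ℕ}
    (ℓ : Fin n → V) (w : V) (I : Finset (Fin n)) : Finset (Sym2 V) :=
  I.biUnion fun i => (pth (ℓ i) w).edges.toFinset

def spanVertsTo {G : SimpleGraph V} (pth : ∀ u v : V, G.Walk u v) {n : ℕ}
    (ℓ : Fin n → V) (w : V) (I : Finset (Fin n)) : Finset V :=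
  I.biUnion fun i => (pth (ℓ i) w).support.toFinset

def halfDeg {G : SimpleGraph V} (pth : ∀ u v : V, G.Walk u v) {n : ℕ}
    (ℓ : Fin n → V) (e : Sym2 V) (w : V) (I : Finset (Fin n)) (v : V) : ℕ :=
  #((insert e (spanEdgesTo pth ℓ w I)).filter (v ∈ ·))

noncomputable def halfMonomial [Fintype V] {G : SimpleGraph V} (pth : ∀ u v : V, G.Walk u v)
    {n : ℕ} (ℓ : Fin n → V) (mbar : V → ℝ) (η : Sym2 V → ℝ) (e : Sym2 V) (w : V)
    (I : Finset (Fin n)) : ℝ :=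
  (∏ v, mbar v ^ (halfDeg pth ℓ e w I v - 2)) * ∏ f ∈ spanEdgesTo pth ℓ w I, η f

noncomputable def treeMonomial [LinearOrder V] {G : SimpleGraph V} (r : V)
    (pth : ∀ u v : V, G.Walk u v) {n : ℕ} (ℓ : Fin n → V) (mbar : V → ℝ) (η : Sym2 V → ℝ) (I : Finset (Fin n)) : ℝ :=
  1 / 4 * (1 - mbar (spanRoot r pth ℓ I) ^ 2) *
    (∏ v ∈ spanInner pth ℓ I, mbar v ^ (spanDeg pth ℓ I v - 2)) *
    ∏ e ∈ spanEdges pth ℓ I, η e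

variable {G : SimpleGraph V} {pth : ∀ u v : V, G.Walk u v} {n : ℕ} {ℓ : Fin n → V}
  {e : Sym2 V} {w w' : V} {I J : Finset (Fin n)}

-- Truncated subtraction: a vertex of degree `< 2` contributes `x v ^ 0 = 1`.
theorem prod_spanInner_eq_prod_univ [Fintype V] {M : Type*} [CommMonoid M] (I : Finset (Fin n))
    (x : V → M) :
    ∏ v ∈ spanInner pth ℓ I, x v ^ (spanDeg pth ℓ I v - 2) =
      ∏ v, x v ^ (spanDeg pth ℓ I v - 2) := by
  refine prod_subset (subset_univ _) fun v _ hv ↦ ?_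
  suffices spanDeg pth ℓ I v < 2 by rw [Nat.sub_eq_zero_of_le this.le, pow_zero]
  simp only [spanInner, mem_filter, not_and, not_le] at hv
  by_cases hV : v ∈ spanVerts pth ℓ I
  · exact hv hV
  suffices spanDeg pth ℓ I v = 0 by omega
  refine card_eq_zero.mpr (filter_false_of_mem fun f hf hvf ↦ hV ?_)
  simp only [spanEdges, spanVerts, mem_biUnion, List.mem_toFinset] at hf ⊢
  obtain ⟨i, hi, j, hj, hf⟩ := hf
  exact ⟨i, hi, j, hj, Walk.mem_support_of_mem_edges hf hvf⟩

theorem reachable_of_mem_spanVertsTo (hG : G.IsAcyclic) (hpth : ∀ u v, (pth u v).IsPath)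
    (hI : ∀ i ∈ I, (G.deleteEdges {e}).Reachable (ℓ i) w) {v : V}
    (hv : v ∈ spanVertsTo pth ℓ w I) : (G.deleteEdges {e}).Reachable v w := by
  simp only [spanVertsTo, mem_biUnion, List.mem_toFinset] at hv
  obtain ⟨i, hi, hv⟩ := hv
  exact hG.reachable_deleteEdges_of_mem_support (hpth _ _) (hI i hi) hv

theorem reachable_of_mem_spanEdgesTo (hG : G.IsAcyclic) (hpth : ∀ u v, (pth u v).IsPath)
    (hI : ∀ i ∈ I, (G.deleteEdges {e}).Reachable (ℓ i) w) {f : Sym2 V}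
    (hf : f ∈ spanEdgesTo pth ℓ w I) {v : V} (hv : v ∈ f) :
    (G.deleteEdges {e}).Reachable v w := by
  refine reachable_of_mem_spanVertsTo hG hpth hI ?_
  simp only [spanEdgesTo, spanVertsTo, mem_biUnion, List.mem_toFinset] at hf ⊢
  obtain ⟨i, hi, hf⟩ := hf
  exact ⟨i, hi, Walk.mem_support_of_mem_edges hf hv⟩

theorem spanEdges_union (hG : G.IsAcyclic) (hpth : ∀ u v, (pth u v).IsPath)
    (hadj : G.Adj w w') (he : s(w, w') = e)
    (hI : ∀ i ∈ I, (G.deleteEdges {e}).Reachable (ℓ i) w)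
    (hJ : ∀ j ∈ J, (G.deleteEdges {e}).Reachable (ℓ j) w')
    (hIne : I.Nonempty) (hJne : J.Nonempty) :
    spanEdges pth ℓ (I ∪ J) = insert e (spanEdgesTo pth ℓ w I ∪ spanEdgesTo pth ℓ w' J) := by
  have hcut : ∀ i ∈ I, ∀ j ∈ J, (pth (ℓ i) (ℓ j)).edges =
      (pth (ℓ i) w).edges ++ e :: (pth (ℓ j) w').edges.reverse := fun i hi j hj ↦ by
    rw [hG.eq_append_cons_reverse hadj he (hpth _ _) (hpth _ _) (hpth _ _) (hI i hi) (hJ j hj)]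
    simp [he]
  have hto : ∀ k ∈ I ∪ J, ∀ f ∈ (pth (ℓ k) w).edges,
      f ∈ insert e (spanEdgesTo pth ℓ w I ∪ spanEdgesTo pth ℓ w' J) := by
    intro k hk f hf
    simp only [mem_insert, mem_union, spanEdgesTo, mem_biUnion, List.mem_toFinset]
    rcases mem_union.mp hk with hk | hk
    · exact .inr (.inl ⟨k, hk, hf⟩)
    rw [hG.eq_bypass_of_isPath (hpth _ _) ((pth (ℓ k) w').concat hadj.symm)] at hf
    have hf := Walk.edges_bypass_subset_edges _ hf
    simp only [Walk.edges_concat, List.concat_eq_append, List.mem_append,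
      List.mem_singleton] at hf
    exact hf.elim (fun h ↦ .inr (.inr ⟨k, hk, h⟩)) fun h ↦ .inl (h.trans (Sym2.eq_swap.trans he))
  ext f
  constructor
  · intro hf
    simp only [spanEdges, mem_biUnion, List.mem_toFinset] at hf
    obtain ⟨k, hk, k', hk', hf⟩ := hf
    rw [hG.eq_bypass_of_isPath (hpth _ _) ((pth (ℓ k) w).append (pth (ℓ k') w).reverse)] at hf
    have hf := Walk.edges_bypass_subset_edges _ hf
    rw [Walk.edges_append, Walk.edges_reverse, List.mem_append, List.mem_reverse] at hf
    exact hf.elim (hto k hk f) (hto k' hk' f)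
  · obtain ⟨i₀, hi₀⟩ := hIne
    obtain ⟨j₀, hj₀⟩ := hJne
    simp only [mem_insert, mem_union, spanEdgesTo, spanEdges, mem_biUnion, List.mem_toFinset]
    rintro (rfl | ⟨i, hi, hf⟩ | ⟨j, hj, hf⟩)
    · exact ⟨i₀, .inl hi₀, j₀, .inr hj₀, by simp [hcut i₀ hi₀ j₀ hj₀]⟩
    · exact ⟨i, .inl hi, j₀, .inr hj₀, by simp [hcut i hi j₀ hj₀, hf]⟩
    · exact ⟨i₀, .inl hi₀, j, .inr hj, by simp [hcut i₀ hi₀ j hj, hf]⟩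

theorem spanVerts_union (hG : G.IsAcyclic) (hpth : ∀ u v, (pth u v).IsPath)
    (hadj : G.Adj w w') (he : s(w, w') = e)
    (hI : ∀ i ∈ I, (G.deleteEdges {e}).Reachable (ℓ i) w)
    (hJ : ∀ j ∈ J, (G.deleteEdges {e}).Reachable (ℓ j) w')
    (hIne : I.Nonempty) (hJne : J.Nonempty) :
    spanVerts pth ℓ (I ∪ J) = spanVertsTo pth ℓ w I ∪ spanVertsTo pth ℓ w' J := by
  obtain ⟨i₀, hi₀⟩ := hIne
  obtain ⟨j₀, hj₀⟩ := hJne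
  have hcut : ∀ i ∈ I, ∀ j ∈ J, (pth (ℓ i) (ℓ j)).support =
      (pth (ℓ i) w).support ++ (pth (ℓ j) w').support.reverse := fun i hi j hj ↦ by
    rw [hG.eq_append_cons_reverse hadj he (hpth _ _) (hpth _ _) (hpth _ _) (hI i hi) (hJ j hj)]
    rw [Walk.support_append, Walk.support_cons, List.tail_cons, Walk.support_reverse]
  have hto : ∀ k ∈ I ∪ J, ∀ v ∈ (pth (ℓ k) w).support,
      v ∈ spanVertsTo pth ℓ w I ∪ spanVertsTo pth ℓ w' J := by
    intro k hk v hv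
    simp only [mem_union, spanVertsTo, mem_biUnion, List.mem_toFinset]
    rcases mem_union.mp hk with hk | hk
    · exact .inl ⟨k, hk, hv⟩
    rw [hG.eq_bypass_of_isPath (hpth _ _) ((pth (ℓ k) w').concat hadj.symm)] at hv
    have hv := Walk.support_bypass_subset_support _ hv
    simp only [Walk.support_concat, List.mem_append, List.mem_singleton] at hv
    exact hv.elim (fun h ↦ .inr ⟨k, hk, h⟩) fun h ↦ .inl ⟨i₀, hi₀, h ▸ Walk.end_mem_support _⟩
  ext v
  constructor
  · intro hv
    simp only [spanVerts, mem_biUnion, List.mem_toFinset] at hv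
    obtain ⟨k, hk, k', hk', hv⟩ := hv
    rw [hG.eq_bypass_of_isPath (hpth _ _) ((pth (ℓ k) w).append (pth (ℓ k') w).reverse)] at hv
    have hv := Walk.support_bypass_subset_support _ hv
    rw [Walk.mem_support_append_iff, Walk.support_reverse, List.mem_reverse] at hv
    exact hv.elim (hto k hk v) (hto k' hk' v)
  · simp only [mem_union, spanVertsTo, spanVerts, mem_biUnion, List.mem_toFinset]
    rintro (⟨i, hi, hv⟩ | ⟨j, hj, hv⟩)
    · exact ⟨i, .inl hi, j₀, .inr hj₀, by simp [hcut i hi j₀ hj₀, hv]⟩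
    · exact ⟨i₀, .inl hi₀, j, .inr hj, by simp [hcut i₀ hi₀ j hj, hv]⟩

theorem spanDeg_union_sub_two (hG : G.IsAcyclic) (hpth : ∀ u v, (pth u v).IsPath)
    (hadj : G.Adj w w') (he : s(w, w') = e)
    (hI : ∀ i ∈ I, (G.deleteEdges {e}).Reachable (ℓ i) w)
    (hJ : ∀ j ∈ J, (G.deleteEdges {e}).Reachable (ℓ j) w')
    (hIne : I.Nonempty) (hJne : J.Nonempty) (v : V) :
    spanDeg pth ℓ (I ∪ J) v - 2 = (halfDeg pth ℓ e w I v - 2) + (halfDeg pth ℓ e w' J v - 2) := by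
  rw [spanDeg, halfDeg, halfDeg, spanEdges_union hG hpth hadj he hI hJ hIne hJne]
  obtain hv | hv := he ▸ (pth v w).reachable.deleteEdges_or (u' := w')
  · exact card_filter_insert_union_sub_two _ _ _ _ fun f hf hvf ↦
      hG.not_reachable_deleteEdges hadj he hv (reachable_of_mem_spanEdgesTo hG hpth hJ hf hvf)
  · rw [union_comm, add_comm]
    exact card_filter_insert_union_sub_two _ _ _ _ fun f hf hvf ↦
      hG.not_reachable_deleteEdges hadj he (reachable_of_mem_spanEdgesTo hG hpth hI hf hvf) hv

theorem prod_spanEdges_union {M : Type*} [CommMonoid M] (hG : G.IsAcyclic)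
    (hpth : ∀ u v, (pth u v).IsPath) (hadj : G.Adj w w') (he : s(w, w') = e)
    (hI : ∀ i ∈ I, (G.deleteEdges {e}).Reachable (ℓ i) w)
    (hJ : ∀ j ∈ J, (G.deleteEdges {e}).Reachable (ℓ j) w')
    (hIne : I.Nonempty) (hJne : J.Nonempty) (y : Sym2 V → M) :
    ∏ f ∈ spanEdges pth ℓ (I ∪ J), y f =
      y e * ((∏ f ∈ spanEdgesTo pth ℓ w I, y f) * ∏ f ∈ spanEdgesTo pth ℓ w' J, y f) := by
  have hdisj : Disjoint (spanEdgesTo pth ℓ w I) (spanEdgesTo pth ℓ w' J) :=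
    disjoint_left.mpr fun f hfI hfJ ↦ hG.not_reachable_deleteEdges hadj he
      (reachable_of_mem_spanEdgesTo hG hpth hI hfI f.out_fst_mem)
      (reachable_of_mem_spanEdgesTo hG hpth hJ hfJ f.out_fst_mem)
  have hnotMem : e ∉ spanEdgesTo pth ℓ w I ∪ spanEdgesTo pth ℓ w' J := by
    rw [mem_union, not_or]
    refine ⟨fun h ↦ ?_, fun h ↦ ?_⟩
    · exact hG.not_reachable_deleteEdges hadj he
        (reachable_of_mem_spanEdgesTo hG hpth hI h (he ▸ Sym2.mem_mk_right w w')) .rfl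
    · exact hG.not_reachable_deleteEdges hadj he .rfl
        (reachable_of_mem_spanEdgesTo hG hpth hJ h (he ▸ Sym2.mem_mk_left w w'))
  rw [spanEdges_union hG hpth hadj he hI hJ hIne hJne, prod_insert hnotMem, prod_union hdisj]

theorem treeMonomial_union [Fintype V] [LinearOrder V] (hG : G.IsAcyclic)
    (hpth : ∀ u v, (pth u v).IsPath) (hadj : G.Adj w w') (he : s(w, w') = e)
    (hI : ∀ i ∈ I, (G.deleteEdges {e}).Reachable (ℓ i) w)
    (hJ : ∀ j ∈ J, (G.deleteEdges {e}).Reachable (ℓ j) w')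
    (hIne : I.Nonempty) (hJne : J.Nonempty) (r : V) (mbar : V → ℝ) (η : Sym2 V → ℝ) :
    treeMonomial r pth ℓ mbar η (I ∪ J) =
      1 / 4 * (1 - mbar (spanRoot r pth ℓ (I ∪ J)) ^ 2) * η e *
        halfMonomial pth ℓ mbar η e w I * halfMonomial pth ℓ mbar η e w' J := by
  rw [treeMonomial, halfMonomial, halfMonomial, prod_spanInner_eq_prod_univ,
    prod_spanEdges_union hG hpth hadj he hI hJ hIne hJne]
  simp_rw [spanDeg_union_sub_two hG hpth hadj he hI hJ hIne hJne, pow_add, prod_mul_distrib]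
  ring

theorem filter_spanVerts_union [LinearOrder V] (hG : G.IsAcyclic)
    (hpth : ∀ u v, (pth u v).IsPath) (hadj : G.Adj w w') (he : s(w, w') = e)
    (hI : ∀ i ∈ I, (G.deleteEdges {e}).Reachable (ℓ i) w)
    (hJ : ∀ j ∈ J, (G.deleteEdges {e}).Reachable (ℓ j) w')
    (hIne : I.Nonempty) (hJne : J.Nonempty) {r : V} (hr : (G.deleteEdges {e}).Reachable r w) :
    (spanVerts pth ℓ (I ∪ J)).filter (fun v ↦ ∀ k ∈ I ∪ J, v ∈ (pth r (ℓ k)).support) =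
      (spanVertsTo pth ℓ w I).filter
        (fun v ↦ (∀ i ∈ I, v ∈ (pth r (ℓ i)).support) ∧ v ∈ (pth r w).support) := by
  have hrJ : ∀ j ∈ J, ∀ v, v ∈ (pth r (ℓ j)).support ↔
      v ∈ (pth r w).support ∨ v ∈ (pth (ℓ j) w').support := fun j hj v ↦ by
    rw [hG.eq_append_cons_reverse hadj he (hpth _ _) (hpth _ _) (hpth _ _) hr (hJ j hj)]
    simp only [Walk.mem_support_append_iff, Walk.support_cons, List.mem_cons,
      Walk.support_reverse, List.mem_reverse]
    exact ⟨fun h ↦ h.elim .inl (·.elim (fun h ↦ .inl (h ▸ Walk.end_mem_support _)) .inr),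
      (·.imp_right .inr)⟩
  obtain ⟨i₀, hi₀⟩ := hIne
  obtain ⟨j₀, hj₀⟩ := hJne
  ext v
  simp only [mem_filter, spanVerts_union hG hpth hadj he hI hJ ⟨i₀, hi₀⟩ ⟨j₀, hj₀⟩, mem_union,
    or_imp, forall_and]
  constructor
  · rintro ⟨hv, hvI, hvJ⟩
    have hvw : (G.deleteEdges {e}).Reachable v w :=
      (hG.reachable_deleteEdges_of_mem_support (hpth _ _) (hr.trans (hI i₀ hi₀).symm)
        (hvI i₀ hi₀)).trans (hI i₀ hi₀)
    refine ⟨hv.resolve_right fun h ↦ hG.not_reachable_deleteEdges hadj he hvw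
      (reachable_of_mem_spanVertsTo hG hpth hJ h), hvI, ?_⟩
    exact ((hrJ j₀ hj₀ v).mp (hvJ j₀ hj₀)).resolve_right fun h ↦
      hG.not_reachable_deleteEdges hadj he hvw
        (hG.reachable_deleteEdges_of_mem_support (hpth _ _) (hJ j₀ hj₀) h)
  · rintro ⟨hv, hvI, hvr⟩
    exact ⟨.inl hv, hvI, fun j hj ↦ (hrJ j hj v).mpr (.inl hvr)⟩

theorem spanRoot_union_eq [LinearOrder V] (hG : G.IsAcyclic)
    (hpth : ∀ u v, (pth u v).IsPath) (hadj : G.Adj w w') (he : s(w, w') = e)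
    {J' : Finset (Fin n)} (hI : ∀ i ∈ I, (G.deleteEdges {e}).Reachable (ℓ i) w)
    (hJ : ∀ j ∈ J, (G.deleteEdges {e}).Reachable (ℓ j) w')
    (hJ' : ∀ j ∈ J', (G.deleteEdges {e}).Reachable (ℓ j) w')
    (hIne : I.Nonempty) (hJne : J.Nonempty) (hJ'ne : J'.Nonempty)
    {r : V} (hr : (G.deleteEdges {e}).Reachable r w) :
    spanRoot r pth ℓ (I ∪ J) = spanRoot r pth ℓ (I ∪ J') := by
  simp only [spanRoot]
  rw [filter_spanVerts_union hG hpth hadj he hI hJ hIne hJne hr,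
    filter_spanVerts_union hG hpth hadj he hI hJ' hIne hJ'ne hr]

theorem exists_treeMonomial_union_eq_mul_of_reachable_root [Fintype V] [LinearOrder V]
    (hG : G.IsAcyclic) (hpth : ∀ u v, (pth u v).IsPath) (hadj : G.Adj w w')
    (he : s(w, w') = e) {A B : Finset (Fin n)}
    (hA : ∀ i ∈ A, (G.deleteEdges {e}).Reachable (ℓ i) w)
    (hB : ∀ j ∈ B, (G.deleteEdges {e}).Reachable (ℓ j) w')
    {r : V} (hr : (G.deleteEdges {e}).Reachable r w) (mbar : V → ℝ) (η : Sym2 V → ℝ) :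
    ∃ F F' : Finset (Fin n) → ℝ, ∀ I ⊆ A, I.Nonempty → ∀ J ⊆ B, J.Nonempty →
      treeMonomial r pth ℓ mbar η (I ∪ J) = F I * F' J := by
  refine ⟨fun I ↦ 1 / 4 * (1 - mbar (spanRoot r pth ℓ (I ∪ B)) ^ 2) * η e *
    halfMonomial pth ℓ mbar η e w I, halfMonomial pth ℓ mbar η e w', ?_⟩
  intro I hIA hIne J hJB hJne
  have hI : ∀ i ∈ I, (G.deleteEdges {e}).Reachable (ℓ i) w := fun i hi ↦ hA i (hIA hi)
  have hJ : ∀ j ∈ J, (G.deleteEdges {e}).Reachable (ℓ j) w' := fun j hj ↦ hB j (hJB hj)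
  rw [treeMonomial_union hG hpth hadj he hI hJ hIne hJne,
    spanRoot_union_eq hG hpth hadj he hI hJ hB hIne hJne (hJne.mono hJB) hr]

theorem exists_treeMonomial_union_eq_mul [Fintype V] [LinearOrder V]
    (hG : G.IsAcyclic) (hpth : ∀ u v, (pth u v).IsPath) (hadj : G.Adj w w')
    (he : s(w, w') = e) {A B : Finset (Fin n)}
    (hA : ∀ i ∈ A, (G.deleteEdges {e}).Reachable (ℓ i) w)
    (hB : ∀ j ∈ B, (G.deleteEdges {e}).Reachable (ℓ j) w')
    (r : V) (mbar : V → ℝ) (η : Sym2 V → ℝ) :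
    ∃ F F' : Finset (Fin n) → ℝ, ∀ I ⊆ A, I.Nonempty → ∀ J ⊆ B, J.Nonempty →
      treeMonomial r pth ℓ mbar η (I ∪ J) = F I * F' J := by
  obtain hr | hr := he ▸ (pth r w).reachable.deleteEdges_or (u' := w')
  · exact exists_treeMonomial_union_eq_mul_of_reachable_root hG hpth hadj he hA hB hr mbar η
  · obtain ⟨F, F', h⟩ := exists_treeMonomial_union_eq_mul_of_reachable_root hG hpth hadj.symm
      (Sym2.eq_swap.trans he) hB hA hr mbar η
    exact ⟨F', F, fun I hI hIne J hJ hJne ↦ by rw [union_comm, h J hJ hJne I hI hIne, mul_comm]⟩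

theorem exists_treeMonomial_union_eq_mul_of_split [Fintype V] [LinearOrder V]
    (hG : G.IsAcyclic) (hpth : ∀ u v, (pth u v).IsPath) (he : e ∈ G.edgeSet)
    {A B : Finset (Fin n)} (hA : A.Nonempty) (hB : B.Nonempty)
    (hsplit : ∀ i ∈ A, ∀ j ∈ B, e ∈ (pth (ℓ i) (ℓ j)).edges)
    (r : V) (mbar : V → ℝ) (η : Sym2 V → ℝ) :
    ∃ F F' : Finset (Fin n) → ℝ, ∀ I ⊆ A, I.Nonempty → ∀ J ⊆ B, J.Nonempty →
      treeMonomial r pth ℓ mbar η (I ∪ J) = F I * F' J := by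
  obtain ⟨w, w', hadj, hw⟩ : ∃ w w', G.Adj w w' ∧ s(w, w') = e := by
    induction e with | h w w' => exact ⟨w, w', he, rfl⟩
  have hsep : ∀ i ∈ A, ∀ j ∈ B, ¬ (G.deleteEdges {e}).Reachable (ℓ i) (ℓ j) :=
    fun i hi j hj h ↦
      (hG.notMem_edges_iff_reachable_deleteEdges (hpth _ _)).mpr h (hsplit i hi j hj)
  have hcover : ∀ v, (G.deleteEdges {e}).Reachable v w ∨ (G.deleteEdges {e}).Reachable v w' :=
    fun v ↦ hw ▸ (pth v w).reachable.deleteEdges_or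
  obtain ⟨i₀, hi₀⟩ := hA
  obtain ⟨j₀, hj₀⟩ := hB
  obtain h | h := hcover (ℓ i₀)
  · obtain ⟨hA, hB⟩ := forall_reachable_of_separated hcover hsep hi₀ hj₀ h
    exact exists_treeMonomial_union_eq_mul hG hpth hadj hw hA hB r mbar η
  · obtain ⟨hA, hB⟩ := forall_reachable_of_separated (fun v ↦ (hcover v).symm) hsep hi₀ hj₀ h
    exact exists_treeMonomial_union_eq_mul hG hpth hadj.symm (Sym2.eq_swap.trans hw) hA hB r
      mbar η

end CutEdge

theorem edge_split_invariants_general (G : SimpleGraph V) (hT : G.IsTree)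
    (r : V) {n : ℕ} (ℓ : Fin n → V)
    (pth : ∀ u v : V, G.Walk u v) (hpth : ∀ u v, (pth u v).IsPath)
    (mbar : V → ℝ)
    (η : Sym2 V → ℝ)
    (κ : Finset (Fin n) → ℝ)
    (hκ : ∀ I : Finset (Fin n), 2 ≤ I.card →
      κ I = 1 / 4 * (1 - mbar (spanRoot r pth ℓ I) ^ 2) *
        (∏ v ∈ spanInner pth ℓ I, mbar v ^ (spanDeg pth ℓ I v - 2)) *
        ∏ e ∈ spanEdges pth ℓ I, η e)
    (e : Sym2 V) (he : e ∈ G.edgeSet)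
    (A B : Finset (Fin n)) (hA : A.Nonempty) (hB : B.Nonempty)
    (hdisj : Disjoint A B)
    (hsplit : ∀ i ∈ A, ∀ j ∈ B, e ∈ (pth (ℓ i) (ℓ j)).edges)
    (I1 I2 J1 J2 : Finset (Fin n))
    (hI1 : I1.Nonempty) (hI2 : I2.Nonempty) (hJ1 : J1.Nonempty) (hJ2 : J2.Nonempty)
    (hI1A : I1 ⊆ A) (hI2A : I2 ⊆ A) (hJ1B : J1 ⊆ B) (hJ2B : J2 ⊆ B) :
    κ (I1 ∪ J1) * κ (I2 ∪ J2) = κ (I1 ∪ J2) * κ (I2 ∪ J1) := by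
  obtain ⟨F, F', hFF'⟩ :=
    exists_treeMonomial_union_eq_mul_of_split hT.isAcyclic hpth he hA hB hsplit r mbar η
  have hκ' : ∀ I ⊆ A, I.Nonempty → ∀ J ⊆ B, J.Nonempty → κ (I ∪ J) = F I * F' J := by
    intro I hIA hIne J hJB hJne
    rw [← hFF' I hIA hIne J hJB hJne]
    refine hκ _ ?_
    rw [card_union_of_disjoint (hdisj.mono hIA hJB)]
    have := hIne.card_pos
    have := hJne.card_pos
    omega
  rw [hκ' I1 hI1A hI1 J1 hJ1B hJ1, hκ' I2 hI2A hI2 J2 hJ2B hJ2, hκ' I1 hI1A hI1 J2 hJ2B hJ2,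
    hκ' I2 hI2A hI2 J1 hJ1B hJ1]
  ring

/-- For a trivalent tree `T` rooted at `r` with leaves `ℓ : Fin n → V`,
the monomial parametrization
`κ_I = ¼(1−μ̄_{r(I)}²) ∏_{v ∈ int(V(I))} μ̄_v^{deg v − 2} ∏_{e ∈ E(I)} η_e`
satisfies, for every edge split `A|B` and nonempty `I₁, I₂ ⊆ A`, `J₁, J₂ ⊆ B`,
the quadratic relations `κ_{I₁∪J₁} κ_{I₂∪J₂} = κ_{I₁∪J₂} κ_{I₂∪J₁}`. -/
theorem edge_split_invariants (G : SimpleGraph V) [DecidableRel G.Adj] (hT : G.IsTree)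
    (r : V) {n : ℕ} (ℓ : Fin n → V) (hinj : Function.Injective ℓ)
    (hleaf : ∀ i, G.degree (ℓ i) = 1)
    (hleaf' : ∀ v, G.degree v = 1 → ∃ i, ℓ i = v)
    (htrivalent : ∀ v : V, G.degree v = 1 ∨ G.degree v = 3)
    (pth : ∀ u v : V, G.Walk u v) (hpth : ∀ u v, (pth u v).IsPath)
    (mbar : V → ℝ) (hmbar : ∀ v, mbar v ∈ Set.Icc (-1 : ℝ) 1)
    (η : Sym2 V → ℝ)
    (κ : Finset (Fin n) → ℝ)
    (hκ : ∀ I : Finset (Fin n), 2 ≤ I.card →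
      κ I = 1 / 4 * (1 - mbar (spanRoot r pth ℓ I) ^ 2) *
        (∏ v ∈ spanInner pth ℓ I, mbar v ^ (spanDeg pth ℓ I v - 2)) *
        ∏ e ∈ spanEdges pth ℓ I, η e)
    (e : Sym2 V) (he : e ∈ G.edgeSet)
    (A B : Finset (Fin n)) (hA : A.Nonempty) (hB : B.Nonempty)
    (hAB : A ∪ B = Finset.univ) (hdisj : Disjoint A B)
    (hsplit : ∀ i ∈ A, ∀ j ∈ B, e ∈ (pth (ℓ i) (ℓ j)).edges)
    (hsplitA : ∀ i ∈ A, ∀ j ∈ A, e ∉ (pth (ℓ i) (ℓ j)).edges)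
    (hsplitB : ∀ i ∈ B, ∀ j ∈ B, e ∉ (pth (ℓ i) (ℓ j)).edges)
    (I1 I2 J1 J2 : Finset (Fin n))
    (hI1 : I1.Nonempty) (hI2 : I2.Nonempty) (hJ1 : J1.Nonempty) (hJ2 : J2.Nonempty)
    (hI1A : I1 ⊆ A) (hI2A : I2 ⊆ A) (hJ1B : J1 ⊆ B) (hJ2B : J2 ⊆ B) :
    κ (I1 ∪ J1) * κ (I2 ∪ J2) = κ (I1 ∪ J2) * κ (I2 ∪ J1) :=
  edge_split_invariants_general G hT r ℓ pth hpth mbar η κ hκ e he A B hA hB hdisj hsplit I1 I2 J1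
    J2 hI1 hI2 hJ1 hJ2 hI1A hI2A hJ1B hJ2B
end
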